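/- arXiv:1403.2293 — 3 statements merged into one kernel-verified Lean document; each statement's English description precedes it below -/
import Mathlib

section
/- Let K be a global field and S a finite set of places of K. Let φ be an endomorphism of P^1 defined over K with good reduction outside S, and let P_0 ∈ P^1(K) be a periodic point of φ of minimal period p^e, where p is the characteristic. Set P_i = φ^i(P_0). Then for any integer of the form p^k · n with n not divisible by p and n < p^{e−k}, one has δ_𝔭(P_0, P_{p^k}) = δ_𝔭(P_0, P_{p^k · n}) for every place 𝔭 ∉ S. -/
/-!
Common definitions used to formalize the statements of
"Preperiodic points for rational functions defined over a global field
in terms of good reduction" (arXiv:1403.2293).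

* A (normalized, non-archimedean) place of a field `K` is modeled as a surjective
  discrete valuation `v : K → ℤ` (with the junk convention `v 0 = 0`).
* `P1 K` is the projective line over `K`; a point `[x : y]` is `P1.mk x y _`.
* An endomorphism of `P1` defined over `K` is a map `φ : P1 K → P1 K` admitting a
  lift by a pair of binary forms of a common degree `d`, given through their
  coefficient vectors, with nonvanishing resultant (the resultant is defined as
  the determinant of the Sylvester matrix).
* `φ` has good reduction at a place `pl` if it admits a lift whose coefficients
  are `pl`-integral and whose resultant is a `pl`-unit.
* `logDist` is the `𝔭`-adic logarithmic distance `δ_𝔭`; two points of `P1 K` have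
  the same reduction modulo `pl` if and only if `0 < logDist pl P Q`.
* The multiplier of a fixed point `[x:y]` of a map lifted by the forms `(a, b)` of
  degree `d` is computed by the trace formula
  `λ = (∂F/∂x (x,y) + ∂G/∂y (x,y) - d⬝c)/c`, where `c` is the scalar with
  `F(x,y) = c⬝x` and `G(x,y) = c⬝y`.
-/

namespace ArxivPreper

/-- A normalized non-archimedean place of `K`: a surjective discrete valuation
`v : K → ℤ`, with the junk convention `v 0 = 0`. -/
structure Place (K : Type*) [Field K] where
  v : K → ℤ
  v_zero : v 0 = 0
  v_mul : ∀ x y : K, x ≠ 0 → y ≠ 0 → v (x * y) = v x + v y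
  v_add : ∀ x y : K, x ≠ 0 → y ≠ 0 → x + y ≠ 0 → min (v x) (v y) ≤ v (x + y)
  v_surj : ∀ n : ℤ, ∃ x : K, x ≠ 0 ∧ v x = n

namespace Place

variable {K : Type*} [Field K] (pl : Place K)

lemma v_one : pl.v 1 = 0 := by
  have h := pl.v_mul 1 1 one_ne_zero one_ne_zero
  rw [one_mul] at h
  omega

lemma v_neg_one : pl.v (-1 : K) = 0 := by
  have h := pl.v_mul (-1 : K) (-1) (by norm_num) (by norm_num)
  rw [show ((-1 : K) * (-1)) = 1 by ring, pl.v_one] at h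
  omega

lemma v_neg (x : K) : pl.v (-x) = pl.v x := by
  by_cases h : x = 0
  · simp [h]
  · have h1 := pl.v_mul (-1) x (by norm_num) h
    rw [show (-1 : K) * x = -x by ring, pl.v_neg_one] at h1
    omega

lemma v_mul_nonneg {x y : K} (hx : 0 ≤ pl.v x) (hy : 0 ≤ pl.v y) : 0 ≤ pl.v (x * y) := by
  by_cases h1 : x = 0
  · simp [h1, pl.v_zero]
  by_cases h2 : y = 0
  · simp [h2, pl.v_zero]
  rw [pl.v_mul x y h1 h2]
  omega

lemma v_add_nonneg {x y : K} (hx : 0 ≤ pl.v x) (hy : 0 ≤ pl.v y) : 0 ≤ pl.v (x + y) := by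
  by_cases h1 : x = 0
  · simpa [h1] using hy
  by_cases h2 : y = 0
  · simpa [h2] using hx
  by_cases h3 : x + y = 0
  · rw [h3, pl.v_zero]
  exact le_trans (le_min hx hy) (pl.v_add x y h1 h2 h3)

lemma hred_add {a b : K} (ha : a = 0 ∨ 0 < pl.v a) (hb : b = 0 ∨ 0 < pl.v b) :
    a + b = 0 ∨ 0 < pl.v (a + b) := by
  rcases ha with ha | ha
  · subst ha; simpa using hb
  rcases hb with hb | hb
  · subst hb; simpa using Or.inr ha
  by_cases h3 : a + b = 0
  · exact Or.inl h3
  · right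
    have hA : a ≠ 0 := by
      intro h; rw [h, pl.v_zero] at ha; exact absurd ha (lt_irrefl 0)
    have hB : b ≠ 0 := by
      intro h; rw [h, pl.v_zero] at hb; exact absurd hb (lt_irrefl 0)
    exact lt_of_lt_of_le (lt_min ha hb) (pl.v_add a b hA hB h3)

lemma hred_mul {a b : K} (ha : 0 ≤ pl.v a) (hb : b = 0 ∨ 0 < pl.v b) :
    a * b = 0 ∨ 0 < pl.v (a * b) := by
  rcases hb with hb | hb
  · exact Or.inl (by rw [hb, mul_zero])
  by_cases h1 : a = 0
  · exact Or.inl (by rw [h1, zero_mul])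
  by_cases h2 : b = 0
  · exact Or.inl (by rw [h2, mul_zero])
  · right
    rw [pl.v_mul a b h1 h2]
    omega

end Place

/-- `K` is a global field: a number field, or a finite extension of `𝔽_p(t)`. -/
def IsGlobalField (K : Type*) [Field K] : Prop :=
  NumberField K ∨
    ∃ (p : ℕ) (hp : Fact p.Prime),
      letI := hp
      ∃ A : Algebra (RatFunc (ZMod p)) K,
        letI := A
        FiniteDimensional (RatFunc (ZMod p)) K

variable {K : Type*} [Field K]

/-- The projective line over `K`. -/
abbrev P1 (K : Type*) [Field K] := Projectivization K (Fin 2 → K)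

/-- The point `[x : y]` of the projective line. -/
def P1.mk (x y : K) (h : ¬(x = 0 ∧ y = 0)) : P1 K :=
  Projectivization.mk K ![x, y]
    (fun h0 => h ⟨by simpa using congrFun h0 0, by simpa using congrFun h0 1⟩)

/-- The point `[0 : 1]`. -/
def P1zero : P1 K := P1.mk 0 1 (fun h => one_ne_zero h.2)

/-- Value at `(x, y)` of the binary form of degree `d` with coefficient
vector `a` (the coefficient of `x^i y^(d-i)` is `a i`). -/
def formEval (d : ℕ) (a : Fin (d + 1) → K) (x y : K) : K :=
  ∑ i : Fin (d + 1), a i * x ^ (i : ℕ) * y ^ (d - (i : ℕ))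

/-- The Sylvester matrix of two binary forms of degree `d`, given by their
coefficient vectors. -/
def sylvester (d : ℕ) (a b : Fin (d + 1) → K) : Matrix (Fin (d + d)) (Fin (d + d)) K :=
  Matrix.of fun i j =>
    if hi : (i : ℕ) < d then
      if h : (i : ℕ) ≤ (j : ℕ) ∧ (j : ℕ) ≤ (i : ℕ) + d then a ⟨(j : ℕ) - (i : ℕ), by omega⟩
      else 0
    else
      if h : (i : ℕ) - d ≤ (j : ℕ) ∧ (j : ℕ) ≤ (i : ℕ) then
        b ⟨(j : ℕ) - ((i : ℕ) - d), by omega⟩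
      else 0

/-- The resultant of two binary forms of degree `d`: the determinant of their
Sylvester matrix. -/
def resultant (d : ℕ) (a b : Fin (d + 1) → K) : K := (sylvester d a b).det

/-- `(a, b)` is a pair of coefficient vectors of binary forms `F`, `G` of common degree `d`,
with nonzero resultant, such that `φ([x:y]) = [F(x,y) : G(x,y)]` on `P1 K`.  This witnesses
that `φ` is an endomorphism of the projective line defined over `K` (of degree `d`). -/
def IsLift (φ : P1 K → P1 K) (d : ℕ) (a b : Fin (d + 1) → K) : Prop :=
  resultant d a b ≠ 0 ∧
    ∀ (x y : K) (h : ¬(x = 0 ∧ y = 0)),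
      ∃ h' : ¬(formEval d a x y = 0 ∧ formEval d b x y = 0),
        φ (P1.mk x y h) = P1.mk (formEval d a x y) (formEval d b x y) h'

/-- `φ` is an endomorphism of `P1` defined over `K`. -/
def IsEndo (φ : P1 K → P1 K) : Prop := ∃ d a b, IsLift φ d a b

/-- `φ` has good reduction at the place `pl`: it can be written as `[F : G]` with `F`, `G`
binary forms of a common degree whose coefficients are `pl`-integral and whose resultant
is a `pl`-unit. -/
def GoodReduction (pl : Place K) (φ : P1 K → P1 K) : Prop :=
  ∃ (d : ℕ) (a b : Fin (d + 1) → K),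
    IsLift φ d a b ∧ (∀ i, 0 ≤ pl.v (a i)) ∧ (∀ i, 0 ≤ pl.v (b i)) ∧
      pl.v (resultant d a b) = 0

open Classical in
/-- The valuation of a place extended by `v 0 = ⊤`. -/
noncomputable def extv (pl : Place K) (x : K) : WithTop ℤ :=
  if x = 0 then ⊤ else (pl.v x : WithTop ℤ)

open Classical in
/-- `min (v x) (v y)` for a nonzero vector `(x, y)`, ignoring vanishing coordinates. -/
noncomputable def vminVec (pl : Place K) (w : Fin 2 → K) : ℤ :=
  if w 0 = 0 then pl.v (w 1)
  else if w 1 = 0 then pl.v (w 0)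
  else min (pl.v (w 0)) (pl.v (w 1))

/-- The `𝔭`-adic logarithmic distance
`δ_𝔭(P,Q) = v(x₁y₂ - x₂y₁) - min (v x₁) (v y₁) - min (v x₂) (v y₂)`
(computed on fixed representatives; it is independent of the choice of homogeneous
coordinates).  Note `δ_𝔭(P,Q) = ⊤` iff `P = Q`, and two points have the same reduction
modulo `pl` iff `0 < δ_𝔭(P,Q)`. -/
noncomputable def logDist (pl : Place K) (P Q : P1 K) : WithTop ℤ :=
  extv pl (P.rep 0 * Q.rep 1 - Q.rep 0 * P.rep 1) +
    ((-(vminVec pl P.rep) - vminVec pl Q.rep : ℤ) : WithTop ℤ)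

/-- The forward orbit `{φ^n(P) : n ∈ ℕ}` of `P` under `φ`. -/
def orbit (φ : P1 K → P1 K) (P : P1 K) : Set (P1 K) := Set.range fun n : ℕ => φ^[n] P

/-- `P` is preperiodic for `φ`: its forward orbit is finite. -/
def Preperiodic (φ : P1 K → P1 K) (P : P1 K) : Prop := (orbit φ P).Finite

/-- `P` is periodic for `φ`. -/
def PeriodicPt (φ : P1 K → P1 K) (P : P1 K) : Prop := ∃ n : ℕ, 0 < n ∧ φ^[n] P = P

/-- `x` is an `S`-unit of `K`. -/
def IsSUnit (S : Finset (Place K)) (x : K) : Prop :=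
  x ≠ 0 ∧ ∀ pl : Place K, pl ∉ S → pl.v x = 0

/-- The ring of `S`-integers of `K`. -/
def SIntegers (S : Finset (Place K)) : Subring K where
  carrier := {x : K | ∀ pl : Place K, pl ∉ S → 0 ≤ pl.v x}
  zero_mem' := fun pl _ => le_of_eq pl.v_zero.symm
  one_mem' := fun pl _ => le_of_eq pl.v_one.symm
  add_mem' := fun hx hy pl hpl => pl.v_add_nonneg (hx pl hpl) (hy pl hpl)
  mul_mem' := fun hx hy pl hpl => pl.v_mul_nonneg (hx pl hpl) (hy pl hpl)
  neg_mem' := fun {x} hx pl hpl => show 0 ≤ pl.v (-x) by rw [pl.v_neg]; exact hx pl hpl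

/-- The local ring `R_𝔭 = {x : v_𝔭(x) ≥ 0}` at the place `pl`. -/
def integersAt (pl : Place K) : Subring K where
  carrier := {x : K | 0 ≤ pl.v x}
  zero_mem' := le_of_eq pl.v_zero.symm
  one_mem' := le_of_eq pl.v_one.symm
  add_mem' := fun hx hy => pl.v_add_nonneg hx hy
  mul_mem' := fun hx hy => pl.v_mul_nonneg hx hy
  neg_mem' := fun {x} hx => show 0 ≤ pl.v (-x) by rw [pl.v_neg]; exact hx

/-- The maximal ideal `{x : v_𝔭(x) > 0}` of the local ring at `pl`. -/
def maxIdealAt (pl : Place K) : Ideal ↥(integersAt pl) where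
  carrier := {x : ↥(integersAt pl) | (x : K) = 0 ∨ 0 < pl.v (x : K)}
  zero_mem' := Or.inl rfl
  add_mem' := fun {a b} ha hb => by
    have h := pl.hred_add (a := (a : K)) (b := (b : K)) ha hb
    show ((a + b : ↥(integersAt pl)) : K) = 0 ∨ 0 < pl.v ((a + b : ↥(integersAt pl)) : K)
    push_cast
    exact h
  smul_mem' := fun c {x} hx => by
    have h := pl.hred_mul (a := (c : K)) (b := (x : K)) c.2 hx
    show ((c • x : ↥(integersAt pl)) : K) = 0 ∨ 0 < pl.v ((c • x : ↥(integersAt pl)) : K)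
    rw [smul_eq_mul]
    push_cast
    exact h

/-- The residue field `k(𝔭)` at the place `pl`. -/
def Residue (pl : Place K) : Type _ := ↥(integersAt pl) ⧸ maxIdealAt pl

/-- Value at `(x,y)` of `∂F/∂x` for the binary form `F` of degree `d` with coefficient
vector `a`. -/
def formEvalDx (d : ℕ) (a : Fin (d + 1) → K) (x y : K) : K :=
  ∑ i : Fin (d + 1), ((i : ℕ) : K) * a i * x ^ ((i : ℕ) - 1) * y ^ (d - (i : ℕ))

/-- Value at `(x,y)` of `∂G/∂y` for the binary form `G` of degree `d` with coefficient
vector `b`. -/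
def formEvalDy (d : ℕ) (b : Fin (d + 1) → K) (x y : K) : K :=
  ∑ i : Fin (d + 1), ((d - (i : ℕ) : ℕ) : K) * b i * x ^ (i : ℕ) * y ^ (d - (i : ℕ) - 1)

/-- The multiplier `λ_P` at a fixed point `P = [x:y]` of the map lifted by the pair of
degree-`d` binary forms `(a, b)`, where `c` is the scalar with `F(x,y) = c⬝x` and
`G(x,y) = c⬝y`: by the trace formula, `λ = (F_x(x,y) + G_y(x,y) - d⬝c)/c`. -/
noncomputable def multiplier (d : ℕ) (a b : Fin (d + 1) → K) (x y c : K) : K :=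
  (formEvalDx d a x y + formEvalDy d b x y - (d : K) * c) / c

/-!
Good reduction makes `φ` non-expanding for the ultrametric `δ_𝔭`: in normalized coordinates,
`F(x₁, y₁) G(x₂, y₂) - F(x₂, y₂) G(x₁, y₁)` is `x₁ y₂ - x₂ y₁` times an integral factor, and since
the resultant is a unit the images are again normalized. A non-expanding map is an isometry on a
periodic orbit, so `A n = δ_𝔭(P₀, Pₙ)` satisfies `min (A a) (A b) ≤ A (a + b)` and depends only
on `n` mod `p^e`. With `N = p^(e-k)` and Euler's theorem `n^φ(N) ≡ 1 [MOD N]` this gives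
`A (p^k) ≤ A (p^k n) ≤ A (p^k n^φ(N)) = A (p^k)`.
-/
section Ultrametric

open Function

variable {X Γ : Type*} [LinearOrder Γ] {δ : X → X → Γ} {f : X → X}

theorem le_iterate_of_le_map (hf : ∀ P Q, δ P Q ≤ δ (f P) (f Q)) (n : ℕ) (P Q : X) :
    δ P Q ≤ δ (f^[n] P) (f^[n] Q) := by
  induction n generalizing P Q with
  | zero => exact le_rfl
  | succ n ih => exact (hf P Q).trans (ih (f P) (f Q))

theorem dist_iterate_iterate_add (hf : ∀ P Q, δ P Q ≤ δ (f P) (f Q)) {P : X} {m : ℕ}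
    (hP : IsPeriodicPt f m P) (hm : 0 < m) (t n : ℕ) :
    δ (f^[t] P) (f^[t + n] P) = δ P (f^[n] P) := by
  refine le_antisymm ?_ ?_
  · have hP' : f^[m * t] P = P := (hP.mul_const t).eq
    have h₁ : f^[m * t - t] (f^[t] P) = P := by
      rw [← iterate_add_apply, Nat.sub_add_cancel (Nat.le_mul_of_pos_left t hm), hP']
    have h₂ : f^[m * t - t] (f^[t + n] P) = f^[n] P := by
      rw [← iterate_add_apply, show m * t - t + (t + n) = n + m * t by
        have := Nat.le_mul_of_pos_left t hm; omega, iterate_add_apply, hP']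
    simpa only [h₁, h₂] using le_iterate_of_le_map hf (m * t - t) (f^[t] P) (f^[t + n] P)
  · simpa only [← iterate_add_apply] using le_iterate_of_le_map hf t P (f^[n] P)

theorem min_le_dist_iterate_add (htri : ∀ P Q R, min (δ P Q) (δ Q R) ≤ δ P R)
    (hf : ∀ P Q, δ P Q ≤ δ (f P) (f Q)) {P : X} {m : ℕ} (hP : IsPeriodicPt f m P) (hm : 0 < m)
    (a b : ℕ) :
    min (δ P (f^[a] P)) (δ P (f^[b] P)) ≤ δ P (f^[a + b] P) := by
  rw [← dist_iterate_iterate_add hf hP hm a b]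
  exact htri _ _ _

theorem dist_iterate_le_mul (htri : ∀ P Q R, min (δ P Q) (δ Q R) ≤ δ P R)
    (hf : ∀ P Q, δ P Q ≤ δ (f P) (f Q)) {P : X} {m : ℕ} (hP : IsPeriodicPt f m P) (hm : 0 < m)
    (a : ℕ) {t : ℕ} (ht : t ≠ 0) :
    δ P (f^[a] P) ≤ δ P (f^[a * t] P) := by
  obtain ⟨t, rfl⟩ := Nat.exists_eq_succ_of_ne_zero ht
  induction t with
  | zero => simp
  | succ t ih =>
    calc δ P (f^[a] P) ≤ min (δ P (f^[a * (t + 1)] P)) (δ P (f^[a] P)) :=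
          le_min (ih t.succ_ne_zero) le_rfl
      _ ≤ δ P (f^[a * (t + 1 + 1)] P) :=
          mul_add_one a (t + 1) ▸ min_le_dist_iterate_add htri hf hP hm _ _

theorem dist_iterate_mul_eq_of_coprime (htri : ∀ P Q R, min (δ P Q) (δ Q R) ≤ δ P R)
    (hf : ∀ P Q, δ P Q ≤ δ (f P) (f Q)) {P : X} {q N n : ℕ} (hP : IsPeriodicPt f (q * N) P)
    (hqN : 0 < q * N) (hn : n.Coprime N) (hn0 : n ≠ 0) :
    δ P (f^[q] P) = δ P (f^[q * n] P) := by
  have htotient : n ^ (N.totient - 1) * n = n ^ N.totient :=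
    pow_sub_one_mul (Nat.totient_pos.2 (Nat.pos_of_mul_pos_left hqN)).ne' n
  have hEuler : q * n ^ N.totient ≡ q [MOD q * N] := by
    simpa using (Nat.ModEq.pow_totient hn).mul_left' q
  refine le_antisymm (dist_iterate_le_mul htri hf hP hqN q hn0) ?_
  calc δ P (f^[q * n] P) ≤ δ P (f^[q * n * n ^ (N.totient - 1)] P) :=
        dist_iterate_le_mul htri hf hP hqN _ (pow_ne_zero _ hn0)
    _ = δ P (f^[q] P) := by
        rw [mul_assoc, mul_comm n, htotient, ← hP.iterate_mod_apply, hEuler, hP.iterate_mod_apply]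

end Ultrametric

namespace Place

variable (pl : Place K)

theorem min_extv_le_extv_add (x y : K) : min (extv pl x) (extv pl y) ≤ extv pl (x + y) := by
  rcases eq_or_ne x 0 with rfl | hx
  · simp
  rcases eq_or_ne y 0 with rfl | hy
  · simp
  by_cases hxy : x + y = 0
  · simp [extv, hxy]
  simpa [extv, hx, hy, hxy] using pl.v_add x y hx hy hxy

theorem extv_mul (x y : K) : extv pl (x * y) = extv pl x + extv pl y := by
  rcases eq_or_ne x 0 with rfl | hx
  · simp [extv]
  rcases eq_or_ne y 0 with rfl | hy
  · simp [extv]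
  simp [extv, hx, hy, pl.v_mul x y hx hy]

/-- Unlike `v`, this is `⊤` at `0`. -/
noncomputable def addVal : AddValuation K (WithTop ℤ) :=
  AddValuation.of (extv pl) (by simp [extv]) (by simp [extv, pl.v_one])
    pl.min_extv_le_extv_add pl.extv_mul

variable {pl}

theorem addVal_apply (x : K) : pl.addVal x = extv pl x := rfl

theorem addVal_of_ne_zero {x : K} (hx : x ≠ 0) : pl.addVal x = pl.v x := by
  simp [addVal_apply, extv, hx]

theorem mem_integersAt_iff {x : K} : x ∈ integersAt pl ↔ 0 ≤ pl.addVal x := by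
  by_cases hx : x = 0
  · simp [hx, zero_mem]
  · rw [addVal_of_ne_zero hx, WithTop.coe_nonneg]
    rfl

theorem addVal_eq_zero_of_v_eq_zero {x : K} (hx : x ≠ 0) (h : pl.v x = 0) :
    pl.addVal x = 0 := by
  rw [addVal_of_ne_zero hx, h, WithTop.coe_zero]

end Place

section Coordinates

open Place

variable {pl : Place K}

theorem coe_vminVec {w : Fin 2 → K} (hw : w ≠ 0) :
    (vminVec pl w : WithTop ℤ) = min (pl.addVal (w 0)) (pl.addVal (w 1)) := by
  have hw' : w 0 ≠ 0 ∨ w 1 ≠ 0 := by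
    by_contra! h
    exact hw (funext fun i => by fin_cases i <;> simp [h.1, h.2])
  unfold vminVec
  by_cases h₀ : w 0 = 0
  · simp [h₀, addVal_of_ne_zero (hw'.resolve_left (not_not.2 h₀))]
  by_cases h₁ : w 1 = 0
  · simp [h₀, h₁, addVal_of_ne_zero h₀]
  · simp [h₀, h₁, addVal_of_ne_zero h₀, addVal_of_ne_zero h₁]

def IsNormalized (pl : Place K) (w : Fin 2 → K) : Prop :=
  min (pl.addVal (w 0)) (pl.addVal (w 1)) = 0

theorem IsNormalized.addVal_nonneg {w : Fin 2 → K} (h : IsNormalized pl w) (i : Fin 2) :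
    0 ≤ pl.addVal (w i) := by
  fin_cases i
  · exact h ▸ min_le_left _ _
  · exact h ▸ min_le_right _ _

theorem IsNormalized.exists_addVal_eq_zero {w : Fin 2 → K} (h : IsNormalized pl w) :
    ∃ i, pl.addVal (w i) = 0 := by
  rcases min_choice (pl.addVal (w 0)) (pl.addVal (w 1)) with h' | h'
  · exact ⟨0, h'.symm.trans h⟩
  · exact ⟨1, h'.symm.trans h⟩

theorem IsNormalized.ne_zero {w : Fin 2 → K} (h : IsNormalized pl w) : w ≠ 0 := by
  rintro rfl
  simp [IsNormalized] at h

def cross (w₁ w₂ : Fin 2 → K) : K := w₁ 0 * w₂ 1 - w₂ 0 * w₁ 1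

theorem logDist_mk {w₁ w₂ : Fin 2 → K} (hw₁ : w₁ ≠ 0) (hw₂ : w₂ ≠ 0) :
    logDist pl (Projectivization.mk K w₁ hw₁) (Projectivization.mk K w₂ hw₂) =
      pl.addVal (cross w₁ w₂) + ((-vminVec pl w₁ - vminVec pl w₂ : ℤ) : WithTop ℤ) := by
  obtain ⟨c₁, hc₁⟩ := Projectivization.exists_smul_eq_mk_rep K w₁ hw₁
  obtain ⟨c₂, hc₂⟩ := Projectivization.exists_smul_eq_mk_rep K w₂ hw₂
  have hvmin : ∀ (c : Kˣ) (w : Fin 2 → K), w ≠ 0 →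
      vminVec pl (c • w) = pl.v c + vminVec pl w := by
    intro c w hw
    have h := coe_vminVec (pl := pl) ((smul_ne_zero_iff_ne c).2 hw)
    simp only [Units.smul_def, Pi.smul_apply, smul_eq_mul, AddValuation.map_mul,
      min_add_add_left, ← coe_vminVec hw, addVal_of_ne_zero c.ne_zero] at h
    exact_mod_cast h
  have hcross : cross (c₁ • w₁) (c₂ • w₂) = cross w₁ w₂ * (c₁ * c₂ : K) := by
    simp only [cross, Units.smul_def, Pi.smul_apply, smul_eq_mul]
    ring
  change pl.addVal (cross _ _) + _ = _
  rw [← hc₁, ← hc₂, hvmin c₁ w₁ hw₁, hvmin c₂ w₂ hw₂, hcross, AddValuation.map_mul,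
    AddValuation.map_mul, addVal_of_ne_zero c₁.ne_zero, addVal_of_ne_zero c₂.ne_zero, add_assoc,
    ← WithTop.coe_add, ← WithTop.coe_add]
  congr 2
  ring

theorem logDist_mk_of_isNormalized {w₁ w₂ : Fin 2 → K} (h₁ : IsNormalized pl w₁)
    (h₂ : IsNormalized pl w₂) :
    logDist pl (Projectivization.mk K w₁ h₁.ne_zero) (Projectivization.mk K w₂ h₂.ne_zero) =
      pl.addVal (cross w₁ w₂) := by
  have hv₁ : vminVec pl w₁ = 0 := by exact_mod_cast (coe_vminVec h₁.ne_zero).trans h₁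
  have hv₂ : vminVec pl w₂ = 0 := by exact_mod_cast (coe_vminVec h₂.ne_zero).trans h₂
  simp [logDist_mk, hv₁, hv₂]

theorem exists_isNormalized_mk_eq (pl : Place K) (P : P1 K) :
    ∃ (w : Fin 2 → K) (hw : IsNormalized pl w), Projectivization.mk K w hw.ne_zero = P := by
  obtain ⟨c, hc, hvc⟩ := pl.v_surj (-vminVec pl P.rep)
  have hnorm : IsNormalized pl (c • P.rep) := by
    have h := coe_vminVec (pl := pl) P.rep_nonzero
    simp only [IsNormalized, Pi.smul_apply, smul_eq_mul, AddValuation.map_mul,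
      min_add_add_left, ← h, addVal_of_ne_zero hc, hvc, ← WithTop.coe_add, neg_add_cancel,
      WithTop.coe_zero]
  refine ⟨c • P.rep, hnorm, ?_⟩
  conv_rhs => rw [← Projectivization.mk_rep P]
  exact (Projectivization.mk_eq_mk_iff K _ _ _ _).2 ⟨Units.mk0 c hc, rfl⟩

theorem logDist_self (P : P1 K) : logDist pl P P = ⊤ := by
  simp [logDist, extv]

theorem cross_mul_eq_add (w₁ w₂ w₃ : Fin 2 → K) (i : Fin 2) :
    cross w₁ w₃ * w₂ i = cross w₁ w₂ * w₃ i + cross w₂ w₃ * w₁ i := by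
  fin_cases i <;> simp [cross] <;> ring

theorem min_addVal_cross_le {w₁ w₂ w₃ : Fin 2 → K} (h₁ : IsNormalized pl w₁)
    (h₂ : IsNormalized pl w₂) (h₃ : IsNormalized pl w₃) :
    min (pl.addVal (cross w₁ w₂)) (pl.addVal (cross w₂ w₃)) ≤ pl.addVal (cross w₁ w₃) := by
  obtain ⟨i, hi⟩ := h₂.exists_addVal_eq_zero
  calc min (pl.addVal (cross w₁ w₂)) (pl.addVal (cross w₂ w₃))
      ≤ min (pl.addVal (cross w₁ w₂ * w₃ i)) (pl.addVal (cross w₂ w₃ * w₁ i)) := by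
        simp only [AddValuation.map_mul]
        exact min_le_min (le_add_of_nonneg_right (h₃.addVal_nonneg i))
          (le_add_of_nonneg_right (h₁.addVal_nonneg i))
    _ ≤ pl.addVal (cross w₁ w₂ * w₃ i + cross w₂ w₃ * w₁ i) := AddValuation.map_add _ _ _
    _ = pl.addVal (cross w₁ w₃) := by
        rw [← cross_mul_eq_add, AddValuation.map_mul, hi, add_zero]

theorem logDist_triangle (pl : Place K) (P Q R : P1 K) :
    min (logDist pl P Q) (logDist pl Q R) ≤ logDist pl P R := by
  obtain ⟨w₁, h₁, rfl⟩ := exists_isNormalized_mk_eq pl P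
  obtain ⟨w₂, h₂, rfl⟩ := exists_isNormalized_mk_eq pl Q
  obtain ⟨w₃, h₃, rfl⟩ := exists_isNormalized_mk_eq pl R
  rw [logDist_mk_of_isNormalized h₁ h₂, logDist_mk_of_isNormalized h₂ h₃,
    logDist_mk_of_isNormalized h₁ h₃]
  exact min_addVal_cross_le h₁ h₂ h₃

theorem formEval_mem {S : Subring K} {d : ℕ} {a : Fin (d + 1) → K} (ha : ∀ i, a i ∈ S)
    {x y : K} (hx : x ∈ S) (hy : y ∈ S) : formEval d a x y ∈ S :=
  Subring.sum_mem _ fun i _ => mul_mem (mul_mem (ha i) (pow_mem hx _)) (pow_mem hy _)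

theorem cross_dvd_monomial_sub {R : Type*} [CommRing R] (x₁ y₁ x₂ y₂ : R) {d i j : ℕ}
    (hi : i ≤ d) (hj : j ≤ d) :
    x₁ * y₂ - x₂ * y₁ ∣ x₁ ^ i * y₁ ^ (d - i) * (x₂ ^ j * y₂ ^ (d - j)) -
      x₂ ^ i * y₂ ^ (d - i) * (x₁ ^ j * y₁ ^ (d - j)) := by
  wlog hij : i ≤ j generalizing i j
  · rw [← dvd_neg]
    convert this hj hi (le_of_not_ge hij) using 1
    ring
  obtain ⟨m, rfl⟩ := Nat.exists_eq_add_of_le hij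
  rw [show d - i = d - (i + m) + m by omega, ← dvd_neg]
  convert (sub_dvd_pow_sub_pow (x₁ * y₂) (x₂ * y₁) m).mul_left
    ((x₁ * x₂) ^ i * (y₁ * y₂) ^ (d - (i + m))) using 1
  ring

theorem cross_dvd_form_cross {R : Type*} [CommRing R] (d : ℕ) (a b : Fin (d + 1) → R)
    (x₁ y₁ x₂ y₂ : R) :
    x₁ * y₂ - x₂ * y₁ ∣
      (∑ i : Fin (d + 1), a i * x₁ ^ (i : ℕ) * y₁ ^ (d - i)) *
          (∑ j : Fin (d + 1), b j * x₂ ^ (j : ℕ) * y₂ ^ (d - j)) -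
        (∑ i : Fin (d + 1), a i * x₂ ^ (i : ℕ) * y₂ ^ (d - i)) *
          (∑ j : Fin (d + 1), b j * x₁ ^ (j : ℕ) * y₁ ^ (d - j)) := by
  simp only [Finset.sum_mul_sum, ← Finset.sum_sub_distrib]
  refine Finset.dvd_sum fun i _ => Finset.dvd_sum fun j _ => ?_
  convert (cross_dvd_monomial_sub x₁ y₁ x₂ y₂ (Nat.lt_succ_iff.1 i.2)
    (Nat.lt_succ_iff.1 j.2)).mul_left (a i * b j) using 1
  ring

def formPair (d : ℕ) (a b : Fin (d + 1) → K) (w : Fin 2 → K) : Fin 2 → K :=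
  ![formEval d a (w 0) (w 1), formEval d b (w 0) (w 1)]

theorem addVal_cross_le_addVal_cross_formPair {d : ℕ} {a b : Fin (d + 1) → K}
    (ha : ∀ i, a i ∈ integersAt pl) (hb : ∀ i, b i ∈ integersAt pl) {w₁ w₂ : Fin 2 → K}
    (h₁ : ∀ i, w₁ i ∈ integersAt pl) (h₂ : ∀ i, w₂ i ∈ integersAt pl) :
    pl.addVal (cross w₁ w₂) ≤ pl.addVal (cross (formPair d a b w₁) (formPair d a b w₂)) := by
  obtain ⟨E, hE⟩ := cross_dvd_form_cross d (fun i => (⟨a i, ha i⟩ : integersAt pl))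
    (fun i => ⟨b i, hb i⟩) ⟨_, h₁ 0⟩ ⟨_, h₁ 1⟩ ⟨_, h₂ 0⟩ ⟨_, h₂ 1⟩
  have hE' : cross (formPair d a b w₁) (formPair d a b w₂) = cross w₁ w₂ * E := by
    simpa [cross, formPair, formEval] using congrArg Subtype.val hE
  rw [hE', AddValuation.map_mul]
  exact le_add_of_nonneg_right (mem_integersAt_iff.1 E.2)

theorem adjugate_apply_mem_of_forall_mem {R : Type*} [CommRing R] {n : Type*} [Fintype n]
    [DecidableEq n] {S : Subring R} {M : Matrix n n R} (h : ∀ i j, M i j ∈ S) (i j : n) :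
    M.adjugate i j ∈ S := by
  have hM : S.subtype.mapMatrix (Matrix.of fun i j => (⟨M i j, h i j⟩ : S)) = M := rfl
  rw [← hM, ← RingHom.map_adjugate]
  exact SetLike.coe_mem _

theorem sylvester_mem {S : Subring K} {d : ℕ} {a b : Fin (d + 1) → K} (ha : ∀ i, a i ∈ S)
    (hb : ∀ i, b i ∈ S) (i j : Fin (d + d)) : sylvester d a b i j ∈ S := by
  unfold sylvester
  rw [Matrix.of_apply]
  split_ifs <;> first | exact ha _ | exact hb _ | exact zero_mem S

theorem sum_sylvester_row_mul (d : ℕ) (c : Fin (d + 1) → K) (x y : K) {s : ℕ} (hs : s < d) :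
    ∑ j : Fin (d + d),
      (if h : s ≤ (j : ℕ) ∧ (j : ℕ) ≤ s + d then c ⟨(j : ℕ) - s, by omega⟩ else 0) *
        (x ^ (j : ℕ) * y ^ (d + d - 1 - (j : ℕ)))
    = x ^ s * y ^ (d - 1 - s) * formEval d c x y := by
  have hsub : (Finset.univ : Finset (Fin (d + 1))).image
      (fun t : Fin (d + 1) => (⟨s + (t : ℕ), by have := t.isLt; omega⟩ : Fin (d + d)))
      ⊆ Finset.univ := Finset.subset_univ _
  rw [← Finset.sum_subset hsub fun j _ hj => ?_]
  · rw [Finset.sum_image fun t₁ _ t₂ _ h => Fin.ext (by simpa using congrArg Fin.val h)]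
    unfold formEval
    rw [Finset.mul_sum]
    refine Finset.sum_congr rfl fun t _ => ?_
    have ht := t.isLt
    rw [dif_pos ⟨by simp, by simp; omega⟩]
    simp only [Nat.add_sub_cancel_left, Fin.eta]
    rw [show d + d - 1 - (s + (t : ℕ)) = (d - 1 - s) + (d - (t : ℕ)) by omega, pow_add, pow_add]
    ring
  · rw [dif_neg, zero_mul]
    rintro ⟨hj₁, hj₂⟩
    exact hj (Finset.mem_image.mpr ⟨⟨(j : ℕ) - s, by omega⟩, Finset.mem_univ _,
      Fin.ext (by simp; omega)⟩)

theorem sylvester_mulVec_monomials (d : ℕ) (a b : Fin (d + 1) → K) (x y : K)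
    (i : Fin (d + d)) :
    (sylvester d a b).mulVec (fun j : Fin (d + d) => x ^ (j : ℕ) * y ^ (d + d - 1 - (j : ℕ))) i
    = if (i : ℕ) < d then x ^ (i : ℕ) * y ^ (d - 1 - (i : ℕ)) * formEval d a x y
      else x ^ ((i : ℕ) - d) * y ^ (d - 1 - ((i : ℕ) - d)) * formEval d b x y := by
  have hi₂ := i.isLt
  simp only [Matrix.mulVec, dotProduct, sylvester, Matrix.of_apply]
  by_cases hi : (i : ℕ) < d
  · simp only [if_pos hi, dif_pos hi]
    exact sum_sylvester_row_mul d a x y hi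
  · simp only [if_neg hi, dif_neg hi]
    rw [← sum_sylvester_row_mul d b x y (by omega : (i : ℕ) - d < d)]
    refine Finset.sum_congr rfl fun j _ => ?_
    congr 1
    split_ifs <;> first | rfl | (exfalso; omega)

theorem addVal_resultant_mul_monomial_pos {d : ℕ} {a b : Fin (d + 1) → K}
    (ha : ∀ i, a i ∈ integersAt pl) (hb : ∀ i, b i ∈ integersAt pl) {x y : K}
    (hx : x ∈ integersAt pl) (hy : y ∈ integersAt pl) (hF : 0 < pl.addVal (formEval d a x y))
    (hG : 0 < pl.addVal (formEval d b x y)) (j : Fin (d + d)) :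
    0 < pl.addVal (resultant d a b * (x ^ (j : ℕ) * y ^ (d + d - 1 - (j : ℕ)))) := by
  set S := sylvester d a b
  set mv : Fin (d + d) → K := fun j => x ^ (j : ℕ) * y ^ (d + d - 1 - (j : ℕ))
  have hSmv : ∀ i, 0 < pl.addVal (S.mulVec mv i) := by
    intro i
    have hmono : ∀ m n : ℕ, 0 ≤ pl.addVal (x ^ m * y ^ n) := fun m n =>
      mem_integersAt_iff.1 (mul_mem (pow_mem hx m) (pow_mem hy n))
    rw [sylvester_mulVec_monomials]
    split_ifs
    · rw [AddValuation.map_mul]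
      exact Right.add_pos_of_nonneg_of_pos (hmono _ _) hF
    · rw [AddValuation.map_mul]
      exact Right.add_pos_of_nonneg_of_pos (hmono _ _) hG
  have h : (S.det • mv) j = S.adjugate.mulVec (S.mulVec mv) j := by
    rw [Matrix.mulVec_mulVec, Matrix.adjugate_mul, Matrix.smul_mulVec, Matrix.one_mulVec]
  change 0 < pl.addVal (S.det * mv j)
  rw [← smul_eq_mul, ← Pi.smul_apply, h, Matrix.mulVec, dotProduct]
  refine pl.addVal.map_lt_sum WithTop.zero_ne_top fun i _ => ?_
  rw [AddValuation.map_mul]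
  exact Right.add_pos_of_nonneg_of_pos (mem_integersAt_iff.1
    (adjugate_apply_mem_of_forall_mem (sylvester_mem ha hb) j i)) (hSmv i)

/-- If `F(x, y)` and `G(x, y)` both reduced to zero, then `adj(Syl) * Syl = Res • 1` applied to
the monomials of degree `2d - 1` would make `Res * x^(2d-1)` and `Res * y^(2d-1)` reduce to zero,
yet `Res` and one of `x, y` are units. -/
theorem isNormalized_formPair {d : ℕ} (hd : d ≠ 0) {a b : Fin (d + 1) → K}
    (ha : ∀ i, a i ∈ integersAt pl) (hb : ∀ i, b i ∈ integersAt pl)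
    (hres : resultant d a b ≠ 0) (hvres : pl.v (resultant d a b) = 0) {w : Fin 2 → K}
    (hw : IsNormalized pl w) : IsNormalized pl (formPair d a b w) := by
  have hwint : ∀ i, w i ∈ integersAt pl := fun i => mem_integersAt_iff.2 (hw.addVal_nonneg i)
  have hFG : ∀ i, 0 ≤ pl.addVal (formPair d a b w i) := by
    intro i
    fin_cases i <;> exact mem_integersAt_iff.1 (formEval_mem ‹_› (hwint 0) (hwint 1))
  refine le_antisymm ?_ (le_min (hFG 0) (hFG 1))
  by_contra! hpos
  have hmonomial := addVal_resultant_mul_monomial_pos ha hb (hwint 0) (hwint 1)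
    ((min_le_left _ _).trans_lt' hpos) ((min_le_right _ _).trans_lt' hpos)
  obtain ⟨k, hk⟩ := hw.exists_addVal_eq_zero
  obtain ⟨j, hj⟩ : ∃ j : Fin (d + d), w 0 ^ (j : ℕ) * w 1 ^ (d + d - 1 - (j : ℕ)) =
      w k ^ (d + d - 1) := by
    fin_cases k
    · exact ⟨⟨d + d - 1, by omega⟩, by simp⟩
    · exact ⟨⟨0, by omega⟩, by simp⟩
  have hzero : pl.addVal (resultant d a b * w k ^ (d + d - 1)) = 0 := by
    rw [AddValuation.map_mul, AddValuation.map_pow, hk, smul_zero, add_zero]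
    exact addVal_eq_zero_of_v_eq_zero hres hvres
  exact (hj ▸ hmonomial j).ne' hzero

theorem IsLift.apply_mk {φ : P1 K → P1 K} {d : ℕ} {a b : Fin (d + 1) → K}
    (h : IsLift φ d a b) (w : Fin 2 → K) (hw : w ≠ 0) :
    ∃ h' : formPair d a b w ≠ 0,
      φ (Projectivization.mk K w hw) = Projectivization.mk K (formPair d a b w) h' := by
  have hw' : ¬(w 0 = 0 ∧ w 1 = 0) := fun h₀ =>
    hw (funext fun i => by fin_cases i <;> simp [h₀.1, h₀.2])
  obtain ⟨hFG, e⟩ := h.2 (w 0) (w 1) hw'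
  have hmk : P1.mk (w 0) (w 1) hw' = Projectivization.mk K w hw := by
    unfold P1.mk
    congr 1
    ext i
    fin_cases i <;> rfl
  exact ⟨fun h₀ => hFG ⟨congrFun h₀ 0, congrFun h₀ 1⟩, hmk ▸ e⟩

theorem GoodReduction.logDist_le_logDist_map {φ : P1 K → P1 K} (h : GoodReduction pl φ)
    (P Q : P1 K) : logDist pl P Q ≤ logDist pl (φ P) (φ Q) := by
  obtain ⟨d, a, b, hlift, ha, hb, hres⟩ := h
  obtain ⟨w₁, h₁, rfl⟩ := exists_isNormalized_mk_eq pl P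
  obtain ⟨w₂, h₂, rfl⟩ := exists_isNormalized_mk_eq pl Q
  obtain ⟨_, e₁⟩ := hlift.apply_mk w₁ h₁.ne_zero
  obtain ⟨_, e₂⟩ := hlift.apply_mk w₂ h₂.ne_zero
  rcases eq_or_ne d 0 with rfl | hd
  · have hconst : formPair 0 a b w₁ = formPair 0 a b w₂ := by simp [formPair, formEval]
    rw [e₁, e₂]
    simp only [hconst, logDist_self, le_top]
  have hn₁ := isNormalized_formPair hd ha hb hlift.1 hres h₁
  have hn₂ := isNormalized_formPair hd ha hb hlift.1 hres h₂
  rw [e₁, e₂, logDist_mk_of_isNormalized h₁ h₂, logDist_mk_of_isNormalized hn₁ hn₂]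
  exact addVal_cross_le_addVal_cross_formPair ha hb
    (fun i => mem_integersAt_iff.2 (h₁.addVal_nonneg i))
    (fun i => mem_integersAt_iff.2 (h₂.addVal_nonneg i))

end Coordinates

theorem stmt10_general (K : Type) [Field K]
    (p : ℕ) [CharP K p]
    (S : Finset (Place K)) (φ : P1 K → P1 K)
    (hgood : ∀ pl : Place K, pl ∉ S → GoodReduction pl φ)
    (P₀ : P1 K)
    (e : ℕ) (hmp : Function.minimalPeriod φ P₀ = p ^ e)
    (k nn : ℕ) (hnn : ¬ p ∣ nn) (hlt : nn < p ^ (e - k))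
    (pl : Place K) (hpl : pl ∉ S) :
    logDist pl P₀ (φ^[p ^ k] P₀) = logDist pl P₀ (φ^[p ^ k * nn] P₀) := by
  have hnn0 : nn ≠ 0 := by
    rintro rfl
    exact hnn (dvd_zero p)
  have hp : p.Prime := (CharP.char_is_prime_or_zero K p).resolve_right fun hp0 => by
    subst hp0
    have := zero_pow_le_one (M₀ := ℕ) (e - k)
    omega
  have hke : k ≤ e := by
    by_contra! hek
    rw [Nat.sub_eq_zero_of_le hek.le, pow_zero] at hlt
    omega
  have hperiod : Function.IsPeriodicPt φ (p ^ k * p ^ (e - k)) P₀ := by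
    rw [← pow_add, Nat.add_sub_cancel' hke, ← hmp]
    exact Function.isPeriodicPt_minimalPeriod φ P₀
  exact dist_iterate_mul_eq_of_coprime (logDist_triangle pl)
    ((hgood pl hpl).logDist_le_logDist_map) hperiod (by have := hp.pos; positivity)
    (Nat.Coprime.pow_right _ ((Nat.Prime.coprime_iff_not_dvd hp).2 hnn).symm) hnn0

/-- Lemma 3.4.  Let `K` be a global field of characteristic `p` and `S`
a finite set of places of `K`.  Let `φ` be an endomorphism of `ℙ¹` defined over `K` with
good reduction outside `S` and let `P₀ ∈ ℙ¹(K)` be periodic of minimal period `p^e`; put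
`P_i = φ^i(P₀)`.  Then for every integer of the form `p^k·n` with `p ∤ n` and
`n < p^(e-k)`, we have `δ_𝔭(P₀, P_(p^k)) = δ_𝔭(P₀, P_(p^k·n))` for every `𝔭 ∉ S`. -/
theorem stmt10 (K : Type) [Field K] (hK : IsGlobalField K)
    (p : ℕ) [CharP K p]
    (S : Finset (Place K)) (φ : P1 K → P1 K) (hφ : IsEndo φ)
    (hgood : ∀ pl : Place K, pl ∉ S → GoodReduction pl φ)
    (P₀ : P1 K) (hP₀ : PeriodicPt φ P₀)
    (e : ℕ) (hmp : Function.minimalPeriod φ P₀ = p ^ e)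
    (k nn : ℕ) (hnn : ¬ p ∣ nn) (hlt : nn < p ^ (e - k))
    (pl : Place K) (hpl : pl ∉ S) :
    logDist pl P₀ (φ^[p ^ k] P₀) = logDist pl P₀ (φ^[p ^ k * nn] P₀) :=
  stmt10_general K p S φ hgood P₀ e hmp k nn hnn hlt pl hpl

end ArxivPreper
end

section
/- Let K be a global field, 𝔭 a non-archimedean place of K, and φ an endomorphism of P^1 defined over K with good reduction at 𝔭. If P ∈ P^1(K) is a periodic point for φ, then P is attracting or indifferent with respect to v_𝔭 (i.e., v_𝔭(λ_P(φ)) ≥ 0). -/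
/-!
Common definitions used to formalize the statements of
"Preperiodic points for rational functions defined over a global field
in terms of good reduction" (arXiv:1403.2293).

* A (normalized, non-archimedean) place of a field `K` is modeled as a surjective
  discrete valuation `v : K → ℤ` (with the junk convention `v 0 = 0`).
* `P1 K` is the projective line over `K`; a point `[x : y]` is `P1.mk x y _`.
* An endomorphism of `P1` defined over `K` is a map `φ : P1 K → P1 K` admitting a
  lift by a pair of binary forms of a common degree `d`, given through their
  coefficient vectors, with nonvanishing resultant (the resultant is defined as
  the determinant of the Sylvester matrix).
* `φ` has good reduction at a place `pl` if it admits a lift whose coefficients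
  are `pl`-integral and whose resultant is a `pl`-unit.
* `logDist` is the `𝔭`-adic logarithmic distance `δ_𝔭`; two points of `P1 K` have
  the same reduction modulo `pl` if and only if `0 < logDist pl P Q`.
* The multiplier of a fixed point `[x:y]` of a map lifted by the forms `(a, b)` of
  degree `d` is computed by the trace formula
  `λ = (∂F/∂x (x,y) + ∂G/∂y (x,y) - d⬝c)/c`, where `c` is the scalar with
  `F(x,y) = c⬝x` and `G(x,y) = c⬝y`.
-/

namespace ArxivPreper

variable {K : Type*} [Field K]

/-! ### Auxiliary material for the proof of Statement 13 -/

namespace Place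

variable {K : Type*} [Field K] (pl : Place K)

lemma v_natCast_nonneg (m : ℕ) : 0 ≤ pl.v (m : K) := by
  induction m with
  | zero => simp [pl.v_zero]
  | succ k ih =>
      push_cast
      exact pl.v_add_nonneg ih (le_of_eq pl.v_one.symm)

lemma v_pow {x : K} (hx : x ≠ 0) (k : ℕ) : pl.v (x ^ k) = k * pl.v x := by
  induction k with
  | zero => simpa using pl.v_one
  | succ m ih =>
      rw [pow_succ, pl.v_mul _ _ (pow_ne_zero _ hx) hx, ih]
      push_cast; ring

lemma v_pow_nonneg {x : K} (hx : 0 ≤ pl.v x) (k : ℕ) : 0 ≤ pl.v (x ^ k) := by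
  by_cases h : x = 0
  · rcases Nat.eq_zero_or_pos k with hk | hk
    · simp [h, hk, pl.v_one]
    · rw [h, zero_pow (by omega)]; simp [pl.v_zero]
  · rw [pl.v_pow h]; positivity

lemma v_inv {x : K} (hx : x ≠ 0) : pl.v x⁻¹ = -pl.v x := by
  have := pl.v_mul x x⁻¹ hx (inv_ne_zero hx)
  rw [mul_inv_cancel₀ hx, pl.v_one] at this; omega

lemma v_div {u w : K} (hu : u ≠ 0) (hw : w ≠ 0) : pl.v (u / w) = pl.v u - pl.v w := by
  rw [div_eq_mul_inv, pl.v_mul u w⁻¹ hu (inv_ne_zero hw), pl.v_inv hw]; ring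

lemma v_sum_nonneg {ι : Type*} {s : Finset ι} {f : ι → K}
    (h : ∀ i ∈ s, 0 ≤ pl.v (f i)) : 0 ≤ pl.v (∑ i ∈ s, f i) := by
  classical
  induction s using Finset.cons_induction with
  | empty => simp [pl.v_zero]
  | cons i s his ih =>
      rw [Finset.sum_cons]
      exact pl.v_add_nonneg (h i (Finset.mem_cons_self i s))
        (ih fun j hj => h j (Finset.mem_cons_of_mem hj))

lemma hred_sum {ι : Type*} {s : Finset ι} {f : ι → K}
    (h : ∀ i ∈ s, f i = 0 ∨ 0 < pl.v (f i)) :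
    (∑ i ∈ s, f i) = 0 ∨ 0 < pl.v (∑ i ∈ s, f i) := by
  classical
  induction s using Finset.cons_induction with
  | empty => simp
  | cons i s his ih =>
      rw [Finset.sum_cons]
      exact pl.hred_add (h i (Finset.mem_cons_self i s))
        (ih fun j hj => h j (Finset.mem_cons_of_mem hj))

end Place

section Aux

variable {K : Type*} [Field K]

open Matrix

lemma euler_term (d k : ℕ) (hi : k ≤ d) (A x y : K) :
    x * ((k : K) * A * x ^ (k - 1) * y ^ (d - k)) +
      y * (((d - k : ℕ) : K) * A * x ^ k * y ^ (d - k - 1)) =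
    (d : K) * (A * x ^ k * y ^ (d - k)) := by
  by_cases h0 : k = 0
  · by_cases hd : d = 0
    · subst h0; subst hd; simp
    · have h1 : y * y ^ (d - k - 1) = y ^ (d - k) := by rw [← pow_succ']; congr 1; omega
      calc x * ((k : K) * A * x ^ (k - 1) * y ^ (d - k)) +
            y * (((d - k : ℕ) : K) * A * x ^ k * y ^ (d - k - 1))
          = ((d - k : ℕ) : K) * A * x ^ k * (y * y ^ (d - k - 1)) := by
            rw [h0]; push_cast; ring
        _ = ((d - k : ℕ) : K) * A * x ^ k * y ^ (d - k) := by rw [h1]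
        _ = (d : K) * (A * x ^ k * y ^ (d - k)) := by
            rw [show d - k = d from by omega]; ring
  · have hx1 : x * x ^ (k - 1) = x ^ k := by rw [← pow_succ']; congr 1; omega
    by_cases hid : k = d
    · have h2 : ((d - k : ℕ) : K) = 0 := by rw [hid]; simp
      calc x * ((k : K) * A * x ^ (k - 1) * y ^ (d - k)) +
            y * (((d - k : ℕ) : K) * A * x ^ k * y ^ (d - k - 1))
          = (k : K) * A * (x * x ^ (k - 1)) * y ^ (d - k) := by rw [h2]; ring
        _ = (k : K) * A * x ^ k * y ^ (d - k) := by rw [hx1]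
        _ = (d : K) * (A * x ^ k * y ^ (d - k)) := by rw [hid]; ring
    · have hy1 : y * y ^ (d - k - 1) = y ^ (d - k) := by rw [← pow_succ']; congr 1; omega
      have hcast : (k : K) + ((d - k : ℕ) : K) = (d : K) := by
        rw [Nat.cast_sub hi]; ring
      calc x * ((k : K) * A * x ^ (k - 1) * y ^ (d - k)) +
            y * (((d - k : ℕ) : K) * A * x ^ k * y ^ (d - k - 1))
          = (k : K) * A * (x * x ^ (k - 1)) * y ^ (d - k) +
            ((d - k : ℕ) : K) * A * x ^ k * (y * y ^ (d - k - 1)) := by ring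
        _ = (k : K) * A * x ^ k * y ^ (d - k) +
            ((d - k : ℕ) : K) * A * x ^ k * y ^ (d - k) := by rw [hx1, hy1]
        _ = ((k : K) + ((d - k : ℕ) : K)) * (A * x ^ k * y ^ (d - k)) := by ring
        _ = (d : K) * (A * x ^ k * y ^ (d - k)) := by rw [hcast]

/-- Euler's identity at a point. -/
lemma euler_formEval (d : ℕ) (a : Fin (d + 1) → K) (x y : K) :
    x * formEvalDx d a x y + y * formEvalDy d a x y = (d : K) * formEval d a x y := by
  rw [formEvalDx, formEvalDy, formEval, Finset.mul_sum, Finset.mul_sum, Finset.mul_sum,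
    ← Finset.sum_add_distrib]
  exact Finset.sum_congr rfl fun i _ => euler_term d (i : ℕ) (by omega) (a i) x y

lemma formEval_smul (d : ℕ) (a : Fin (d + 1) → K) (t x y : K) :
    formEval d a (t * x) (t * y) = t ^ d * formEval d a x y := by
  rw [formEval, formEval, Finset.mul_sum]
  refine Finset.sum_congr rfl fun i _ => ?_
  have ht : t ^ (i : ℕ) * t ^ (d - (i : ℕ)) = t ^ d := by rw [← pow_add]; congr 1; omega
  rw [mul_pow, mul_pow]
  linear_combination (a i * x ^ (i : ℕ) * y ^ (d - (i : ℕ))) * ht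

lemma formEvalDx_smul (d : ℕ) (a : Fin (d + 1) → K) (t x y : K) :
    formEvalDx d a (t * x) (t * y) = t ^ (d - 1) * formEvalDx d a x y := by
  rw [formEvalDx, formEvalDx, Finset.mul_sum]
  refine Finset.sum_congr rfl fun i _ => ?_
  by_cases h0 : (i : ℕ) = 0
  · simp [h0]
  · have ht : t ^ ((i : ℕ) - 1) * t ^ (d - (i : ℕ)) = t ^ (d - 1) := by
      rw [← pow_add]; congr 1; omega
    rw [mul_pow, mul_pow]
    linear_combination (((i : ℕ) : K) * a i * x ^ ((i : ℕ) - 1) * y ^ (d - (i : ℕ))) * ht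

lemma formEvalDy_smul (d : ℕ) (b : Fin (d + 1) → K) (t x y : K) :
    formEvalDy d b (t * x) (t * y) = t ^ (d - 1) * formEvalDy d b x y := by
  rw [formEvalDy, formEvalDy, Finset.mul_sum]
  refine Finset.sum_congr rfl fun i _ => ?_
  by_cases h0 : (i : ℕ) = d
  · simp [h0]
  · have ht : t ^ (i : ℕ) * t ^ (d - (i : ℕ) - 1) = t ^ (d - 1) := by
      rw [← pow_add]; congr 1; omega
    rw [mul_pow, mul_pow]
    linear_combination (((d - (i : ℕ) : ℕ) : K) * b i * x ^ (i : ℕ) * y ^ (d - (i : ℕ) - 1)) * ht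

lemma formEval_zero_zero {d : ℕ} (hd : 1 ≤ d) (a : Fin (d + 1) → K) :
    formEval d a 0 0 = 0 := by
  rw [formEval]
  refine Finset.sum_eq_zero fun i _ => ?_
  by_cases h0 : (i : ℕ) = 0
  · rw [h0, zero_pow (show d - 0 ≠ 0 by omega)]; ring
  · rw [zero_pow h0]; ring

lemma formEvalDx_degree_zero (A : Fin 1 → K) (u w : K) : formEvalDx 0 A u w = 0 := by
  rw [formEvalDx]
  refine Finset.sum_eq_zero fun i _ => ?_
  have : (i : ℕ) = 0 := by omega
  rw [this]; simp

lemma formEvalDy_degree_zero (A : Fin 1 → K) (u w : K) : formEvalDy 0 A u w = 0 := by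
  rw [formEvalDy]
  refine Finset.sum_eq_zero fun i _ => ?_
  have : (i : ℕ) = 0 := by omega
  rw [this]; simp

lemma formEval_v_nonneg (pl : Place K) (d : ℕ) (a : Fin (d + 1) → K) (x y : K)
    (ha : ∀ i, 0 ≤ pl.v (a i)) (hx : 0 ≤ pl.v x) (hy : 0 ≤ pl.v y) :
    0 ≤ pl.v (formEval d a x y) := by
  refine pl.v_sum_nonneg fun i _ => ?_
  exact pl.v_mul_nonneg (pl.v_mul_nonneg (ha i) (pl.v_pow_nonneg hx _)) (pl.v_pow_nonneg hy _)

lemma formEvalDx_v_nonneg (pl : Place K) (d : ℕ) (a : Fin (d + 1) → K) (x y : K)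
    (ha : ∀ i, 0 ≤ pl.v (a i)) (hx : 0 ≤ pl.v x) (hy : 0 ≤ pl.v y) :
    0 ≤ pl.v (formEvalDx d a x y) := by
  refine pl.v_sum_nonneg fun i _ => ?_
  exact pl.v_mul_nonneg (pl.v_mul_nonneg (pl.v_mul_nonneg (pl.v_natCast_nonneg _) (ha i))
    (pl.v_pow_nonneg hx _)) (pl.v_pow_nonneg hy _)

lemma formEvalDy_v_nonneg (pl : Place K) (d : ℕ) (b : Fin (d + 1) → K) (x y : K)
    (hb : ∀ i, 0 ≤ pl.v (b i)) (hx : 0 ≤ pl.v x) (hy : 0 ≤ pl.v y) :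
    0 ≤ pl.v (formEvalDy d b x y) := by
  refine pl.v_sum_nonneg fun i _ => ?_
  exact pl.v_mul_nonneg (pl.v_mul_nonneg (pl.v_mul_nonneg (pl.v_natCast_nonneg _) (hb i))
    (pl.v_pow_nonneg hx _)) (pl.v_pow_nonneg hy _)

/-- One-variable restriction of the binary form along a polynomial curve. -/
noncomputable def lineEval (d : ℕ) (a : Fin (d + 1) → K) (p q : Polynomial K) : Polynomial K :=
  ∑ i : Fin (d + 1), Polynomial.C (a i) * p ^ (i : ℕ) * q ^ (d - (i : ℕ))

lemma lineEval_eval (d : ℕ) (a : Fin (d + 1) → K) (p q : Polynomial K) (t : K) :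
    (lineEval d a p q).eval t = formEval d a (p.eval t) (q.eval t) := by
  rw [lineEval, formEval, Polynomial.eval_finset_sum]
  exact Finset.sum_congr rfl fun i _ => by
    rw [Polynomial.eval_mul, Polynomial.eval_mul, Polynomial.eval_C, Polynomial.eval_pow,
      Polynomial.eval_pow]

lemma lineEval_deriv_eval (d : ℕ) (a : Fin (d + 1) → K) (p q : Polynomial K) (t : K) :
    ((lineEval d a p q).derivative).eval t =
      formEvalDx d a (p.eval t) (q.eval t) * (p.derivative.eval t) +
        formEvalDy d a (p.eval t) (q.eval t) * (q.derivative.eval t) := by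
  rw [lineEval, formEvalDx, formEvalDy]
  rw [map_sum]
  rw [Polynomial.eval_finset_sum, Finset.sum_mul, Finset.sum_mul, ← Finset.sum_add_distrib]
  refine Finset.sum_congr rfl fun i _ => ?_
  rw [Polynomial.derivative_mul, Polynomial.derivative_mul, Polynomial.derivative_C,
    Polynomial.derivative_pow, Polynomial.derivative_pow]
  simp only [Polynomial.eval_add, Polynomial.eval_mul, Polynomial.eval_C, Polynomial.eval_pow,
    Polynomial.eval_natCast, zero_mul, add_mul, zero_add]
  ring

lemma row_sum (e : ℕ) (A' : ℕ → K) (u w : K) (i0 : ℕ) (hi0 : i0 < e) :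
    ∑ j : Fin (e + e), (if i0 ≤ (j : ℕ) ∧ (j : ℕ) ≤ i0 + e then A' ((j : ℕ) - i0) else 0) *
        (u ^ (j : ℕ) * w ^ (e + e - 1 - (j : ℕ))) =
      u ^ i0 * w ^ (e - 1 - i0) *
        ∑ k : Fin (e + 1), A' (k : ℕ) * u ^ (k : ℕ) * w ^ (e - (k : ℕ)) := by
  classical
  set f : Fin (e + e) → K := fun j =>
    (if i0 ≤ (j : ℕ) ∧ (j : ℕ) ≤ i0 + e then A' ((j : ℕ) - i0) else 0) *
      (u ^ (j : ℕ) * w ^ (e + e - 1 - (j : ℕ))) with hf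
  have hemb : Function.Injective
      (fun k : Fin (e + 1) => (⟨i0 + (k : ℕ), by omega⟩ : Fin (e + e))) := by
    intro k1 k2 h
    have : i0 + (k1 : ℕ) = i0 + (k2 : ℕ) := congrArg Fin.val h
    exact Fin.ext (by omega)
  set emb : Fin (e + 1) ↪ Fin (e + e) := ⟨_, hemb⟩ with hembdef
  have hsub : (Finset.univ.map emb) ⊆ Finset.univ := Finset.subset_univ _
  have hzero : ∀ j ∈ Finset.univ, j ∉ Finset.univ.map emb → f j = 0 := by
    intro j _ hj
    have hcond : ¬(i0 ≤ (j : ℕ) ∧ (j : ℕ) ≤ i0 + e) := by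
      intro hcond
      apply hj
      rw [Finset.mem_map]
      exact ⟨⟨(j : ℕ) - i0, by omega⟩, Finset.mem_univ _,
        Fin.ext (show i0 + ((j : ℕ) - i0) = (j : ℕ) by omega)⟩
    rw [hf]; simp only [hcond, if_false, zero_mul]
  have h1 : ∑ j : Fin (e + e), f j = ∑ k : Fin (e + 1), f (emb k) := by
    rw [← Finset.sum_subset hsub hzero, Finset.sum_map]
  rw [h1, Finset.mul_sum]
  refine Finset.sum_congr rfl fun k _ => ?_
  have hcond : i0 ≤ i0 + (k : ℕ) ∧ i0 + (k : ℕ) ≤ i0 + e := ⟨by omega, by omega⟩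
  have hval : ((emb k : Fin (e + e)) : ℕ) = i0 + (k : ℕ) := rfl
  rw [hf]
  simp only [hval, hcond, and_self, if_true]
  rw [show i0 + (k : ℕ) - i0 = (k : ℕ) from by omega]
  have hu : u ^ (i0 + (k : ℕ)) = u ^ i0 * u ^ (k : ℕ) := pow_add u i0 k
  have hw : w ^ (e + e - 1 - (i0 + (k : ℕ))) = w ^ (e - 1 - i0) * w ^ (e - (k : ℕ)) := by
    rw [← pow_add]; congr 1; omega
  rw [hu, hw]; ring

/-- A pair is `pl`-normalized: integral with a unit coordinate. -/
def Nrm (pl : Place K) (u w : K) : Prop :=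
  0 ≤ pl.v u ∧ 0 ≤ pl.v w ∧ ((u ≠ 0 ∧ pl.v u = 0) ∨ (w ≠ 0 ∧ pl.v w = 0))

lemma v_adjugate_nonneg (pl : Place K) {m : ℕ} (M : Matrix (Fin m) (Fin m) K)
    (h : ∀ i j, 0 ≤ pl.v (M i j)) : ∀ i j, 0 ≤ pl.v (M.adjugate i j) := by
  intro i j
  set R := integersAt pl
  set N : Matrix (Fin m) (Fin m) R := fun i j => ⟨M i j, h i j⟩ with hN
  have hmap : (R.subtype).mapMatrix N = M := by
    ext i' j'; rfl
  have hadj := RingHom.map_adjugate (R.subtype) N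
  rw [hmap] at hadj
  have : M.adjugate i j = ((N.adjugate i j : R) : K) := by
    rw [← hadj]; rfl
  rw [this]
  exact (N.adjugate i j).2

lemma keyStep (pl : Place K) {e : ℕ} (he : 1 ≤ e) (A B : Fin (e + 1) → K)
    (hA : ∀ i, 0 ≤ pl.v (A i)) (hB : ∀ i, 0 ≤ pl.v (B i))
    (hres : resultant e A B ≠ 0) (hres0 : pl.v (resultant e A B) = 0)
    {u w : K} (h : Nrm pl u w) :
    Nrm pl (formEval e A u w) (formEval e B u w) := by
  classical
  obtain ⟨hu, hw, hmin⟩ := h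
  set F := formEval e A u w with hF
  set G := formEval e B u w with hG
  have hFv : 0 ≤ pl.v F := formEval_v_nonneg pl e A u w hA hu hw
  have hGv : 0 ≤ pl.v G := formEval_v_nonneg pl e B u w hB hu hw
  refine ⟨hFv, hGv, ?_⟩
  by_contra hcon
  push_neg at hcon
  obtain ⟨hcF, hcG⟩ := hcon
  have hFm : F = 0 ∨ 0 < pl.v F := by
    by_cases h0 : F = 0
    · exact Or.inl h0
    · exact Or.inr (lt_of_le_of_ne hFv (Ne.symm (hcF h0)))
  have hGm : G = 0 ∨ 0 < pl.v G := by
    by_cases h0 : G = 0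
    · exact Or.inl h0
    · exact Or.inr (lt_of_le_of_ne hGv (Ne.symm (hcG h0)))
  set M := sylvester e A B with hM
  set wvec : Fin (e + e) → K := fun j => u ^ (j : ℕ) * w ^ (e + e - 1 - (j : ℕ)) with hwvec
  have hMint : ∀ i j, 0 ≤ pl.v (M i j) := by
    intro i j
    rw [hM, sylvester]
    simp only [Matrix.of_apply]
    by_cases hi : (i : ℕ) < e
    · rw [dif_pos hi]
      by_cases hcond : (i : ℕ) ≤ (j : ℕ) ∧ (j : ℕ) ≤ (i : ℕ) + e
      · rw [dif_pos hcond]; exact hA _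
      · rw [dif_neg hcond]; exact le_of_eq pl.v_zero.symm
    · rw [dif_neg hi]
      by_cases hcond : (i : ℕ) - e ≤ (j : ℕ) ∧ (j : ℕ) ≤ (i : ℕ)
      · rw [dif_pos hcond]; exact hB _
      · rw [dif_neg hcond]; exact le_of_eq pl.v_zero.symm
  have hmv : ∀ i : Fin (e + e), (M *ᵥ wvec) i =
      if (i : ℕ) < e then u ^ (i : ℕ) * w ^ (e - 1 - (i : ℕ)) * F
      else u ^ ((i : ℕ) - e) * w ^ (e - 1 - ((i : ℕ) - e)) * G := by
    intro i
    rw [Matrix.mulVec]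
    by_cases hi : (i : ℕ) < e
    · rw [if_pos hi]
      set A' : ℕ → K := fun m => if h : m < e + 1 then A ⟨m, h⟩ else 0 with hA'
      have hA'e : ∀ (m : ℕ) (h : m < e + 1), A' m = A ⟨m, h⟩ := by
        intro m h; rw [hA']; simp only []; rw [dif_pos h]
      have hrow : ∀ j : Fin (e + e), M i j =
          if (i : ℕ) ≤ (j : ℕ) ∧ (j : ℕ) ≤ (i : ℕ) + e then A' ((j : ℕ) - (i : ℕ)) else 0 := by
        intro j
        rw [hM, sylvester]
        simp only [Matrix.of_apply]
        rw [dif_pos hi]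
        by_cases hcond : (i : ℕ) ≤ (j : ℕ) ∧ (j : ℕ) ≤ (i : ℕ) + e
        · rw [dif_pos hcond, if_pos hcond, hA'e ((j : ℕ) - (i : ℕ)) (by omega)]
        · rw [dif_neg hcond, if_neg hcond]
      have hdp : (M i) ⬝ᵥ wvec = ∑ j : Fin (e + e), M i j * wvec j := rfl
      rw [hdp]
      calc ∑ j : Fin (e + e), M i j * wvec j
          = ∑ j : Fin (e + e),
              (if (i : ℕ) ≤ (j : ℕ) ∧ (j : ℕ) ≤ (i : ℕ) + e then A' ((j : ℕ) - (i : ℕ)) else 0) *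
                (u ^ (j : ℕ) * w ^ (e + e - 1 - (j : ℕ))) := by
            refine Finset.sum_congr rfl fun j _ => ?_
            rw [hrow j]
        _ = u ^ (i : ℕ) * w ^ (e - 1 - (i : ℕ)) *
              ∑ k : Fin (e + 1), A' (k : ℕ) * u ^ (k : ℕ) * w ^ (e - (k : ℕ)) :=
            row_sum e A' u w (i : ℕ) hi
        _ = u ^ (i : ℕ) * w ^ (e - 1 - (i : ℕ)) * F := by
            rw [hF, formEval]
            congr 1
            refine Finset.sum_congr rfl fun k _ => ?_
            rw [hA'e (k : ℕ) (by omega)]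
    · rw [if_neg hi]
      set B' : ℕ → K := fun m => if h : m < e + 1 then B ⟨m, h⟩ else 0 with hB'
      have hB'e : ∀ (m : ℕ) (h : m < e + 1), B' m = B ⟨m, h⟩ := by
        intro m h; rw [hB']; simp only []; rw [dif_pos h]
      have hrow : ∀ j : Fin (e + e), M i j =
          if ((i : ℕ) - e) ≤ (j : ℕ) ∧ (j : ℕ) ≤ ((i : ℕ) - e) + e then
            B' ((j : ℕ) - ((i : ℕ) - e)) else 0 := by
        intro j
        rw [hM, sylvester]
        simp only [Matrix.of_apply]
        rw [dif_neg hi]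
        by_cases hcond : (i : ℕ) - e ≤ (j : ℕ) ∧ (j : ℕ) ≤ (i : ℕ)
        · rw [dif_pos hcond, if_pos (by omega), hB'e ((j : ℕ) - ((i : ℕ) - e)) (by omega)]
        · rw [dif_neg hcond, if_neg (by omega)]
      have hdp : (M i) ⬝ᵥ wvec = ∑ j : Fin (e + e), M i j * wvec j := rfl
      rw [hdp]
      calc ∑ j : Fin (e + e), M i j * wvec j
          = ∑ j : Fin (e + e),
              (if ((i : ℕ) - e) ≤ (j : ℕ) ∧ (j : ℕ) ≤ ((i : ℕ) - e) + e then
                B' ((j : ℕ) - ((i : ℕ) - e)) else 0) *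
                (u ^ (j : ℕ) * w ^ (e + e - 1 - (j : ℕ))) := by
            refine Finset.sum_congr rfl fun j _ => ?_
            rw [hrow j]
        _ = u ^ ((i : ℕ) - e) * w ^ (e - 1 - ((i : ℕ) - e)) *
              ∑ k : Fin (e + 1), B' (k : ℕ) * u ^ (k : ℕ) * w ^ (e - (k : ℕ)) :=
            row_sum e B' u w ((i : ℕ) - e) (by omega)
        _ = u ^ ((i : ℕ) - e) * w ^ (e - 1 - ((i : ℕ) - e)) * G := by
            rw [hG, formEval]
            congr 1
            refine Finset.sum_congr rfl fun k _ => ?_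
            rw [hB'e (k : ℕ) (by omega)]
  have hid : ∀ j : Fin (e + e), M.det * wvec j =
      ∑ i : Fin (e + e), M.adjugate j i * (M *ᵥ wvec) i := by
    intro j
    have h1 : M.adjugate *ᵥ (M *ᵥ wvec) = M.det • wvec := by
      rw [Matrix.mulVec_mulVec, Matrix.adjugate_mul, Matrix.smul_mulVec,
        Matrix.one_mulVec]
    have h2 := congrFun h1 j
    rw [Pi.smul_apply, smul_eq_mul] at h2
    rw [← h2]; rfl
  have hadj := v_adjugate_nonneg pl M hMint
  have hmem : ∀ j : Fin (e + e), M.det * wvec j = 0 ∨ 0 < pl.v (M.det * wvec j) := by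
    intro j
    rw [hid j]
    refine pl.hred_sum fun i _ => ?_
    rw [hmv i]
    by_cases hi : (i : ℕ) < e
    · rw [if_pos hi, show M.adjugate j i * (u ^ (i : ℕ) * w ^ (e - 1 - (i : ℕ)) * F) =
        (M.adjugate j i * (u ^ (i : ℕ) * w ^ (e - 1 - (i : ℕ)))) * F from by ring]
      exact pl.hred_mul (pl.v_mul_nonneg (hadj j i)
        (pl.v_mul_nonneg (pl.v_pow_nonneg hu _) (pl.v_pow_nonneg hw _))) hFm
    · rw [if_neg hi, show M.adjugate j i * (u ^ ((i : ℕ) - e) * w ^ (e - 1 - ((i : ℕ) - e)) * G) =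
        (M.adjugate j i * (u ^ ((i : ℕ) - e) * w ^ (e - 1 - ((i : ℕ) - e)))) * G from by ring]
      exact pl.hred_mul (pl.v_mul_nonneg (hadj j i)
        (pl.v_mul_nonneg (pl.v_pow_nonneg hu _) (pl.v_pow_nonneg hw _))) hGm
  have hdet : M.det = resultant e A B := rfl
  rcases hmin with ⟨hu0, huv⟩ | ⟨hw0, hwv⟩
  · have hj := hmem ⟨e + e - 1, by omega⟩
    have hwj : wvec ⟨e + e - 1, by omega⟩ = u ^ (e + e - 1) := by
      rw [hwvec]; simp
    rw [hwj] at hj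
    have hne : M.det * u ^ (e + e - 1) ≠ 0 :=
      mul_ne_zero (hdet ▸ hres) (pow_ne_zero _ hu0)
    have hv : pl.v (M.det * u ^ (e + e - 1)) = 0 := by
      rw [pl.v_mul _ _ (hdet ▸ hres) (pow_ne_zero _ hu0), hdet, hres0, pl.v_pow hu0, huv]
      ring
    rcases hj with h0 | hpos
    · exact hne h0
    · omega
  · have hj := hmem ⟨0, by omega⟩
    have hwj : wvec ⟨0, by omega⟩ = w ^ (e + e - 1) := by
      rw [hwvec]; simp
    rw [hwj] at hj
    have hne : M.det * w ^ (e + e - 1) ≠ 0 :=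
      mul_ne_zero (hdet ▸ hres) (pow_ne_zero _ hw0)
    have hv : pl.v (M.det * w ^ (e + e - 1)) = 0 := by
      rw [pl.v_mul _ _ (hdet ▸ hres) (pow_ne_zero _ hw0), hdet, hres0, pl.v_pow hw0, hwv]
      ring
    rcases hj with h0 | hpos
    · exact hne h0
    · omega

lemma mk_eq_scalar {x y u w : K} (h1 : ¬(x = 0 ∧ y = 0)) (h2 : ¬(u = 0 ∧ w = 0))
    (heq : P1.mk x y h1 = P1.mk u w h2) : ∃ s : K, s ≠ 0 ∧ x = s * u ∧ y = s * w := by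
  rw [P1.mk, P1.mk, Projectivization.mk_eq_mk_iff] at heq
  obtain ⟨t, ht⟩ := heq
  refine ⟨(t : K), t.ne_zero, ?_, ?_⟩
  · have h0 := congrFun ht 0
    simpa [Units.smul_def] using h0.symm
  · have h0 := congrFun ht 1
    simpa [Units.smul_def] using h0.symm

/-- Value iterates of the pair of forms. -/
noncomputable def itV (e : ℕ) (A B : Fin (e + 1) → K) (x y : K) : ℕ → K × K
  | 0 => (x, y)
  | k + 1 =>
      let p := itV e A B x y k
      (formEval e A p.1 p.2, formEval e B p.1 p.2)

/-- Polynomial iterates of the pair of forms along a polynomial curve. -/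
noncomputable def itP (e : ℕ) (A B : Fin (e + 1) → K) (p0 q0 : Polynomial K) :
    ℕ → Polynomial K × Polynomial K
  | 0 => (p0, q0)
  | k + 1 =>
      let pq := itP e A B p0 q0 k
      (lineEval e A pq.1 pq.2, lineEval e B pq.1 pq.2)

lemma itP_eval (e : ℕ) (A B : Fin (e + 1) → K) (p0 q0 : Polynomial K) (k : ℕ) (t : K) :
    ((itP e A B p0 q0 k).1.eval t = (itV e A B (p0.eval t) (q0.eval t) k).1) ∧
      ((itP e A B p0 q0 k).2.eval t = (itV e A B (p0.eval t) (q0.eval t) k).2) := by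
  induction k with
  | zero => exact ⟨rfl, rfl⟩
  | succ k ih =>
      constructor
      · show (lineEval e A (itP e A B p0 q0 k).1 (itP e A B p0 q0 k).2).eval t = _
        rw [lineEval_eval, ih.1, ih.2]; rfl
      · show (lineEval e B (itP e A B p0 q0 k).1 (itP e A B p0 q0 k).2).eval t = _
        rw [lineEval_eval, ih.1, ih.2]; rfl

end Aux


section Core

variable {K : Type*} [Field K]

lemma core [Infinite K] (pl : Place K) (φ : P1 K → P1 K)
    {e : ℕ} {A B : Fin (e + 1) → K} (hlA : IsLift φ e A B)
    (hAi : ∀ i, 0 ≤ pl.v (A i)) (hBi : ∀ i, 0 ≤ pl.v (B i))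
    (hres0 : pl.v (resultant e A B) = 0)
    {n : ℕ} (hn1 : 1 ≤ n) {d : ℕ} (hd : 1 ≤ d) {a b : Fin (d + 1) → K}
    (hlift : IsLift (φ^[n]) d a b)
    {x y : K} (hxy : ¬(x = 0 ∧ y = 0)) (hfix : φ^[n] (P1.mk x y hxy) = P1.mk x y hxy)
    (hNrm : Nrm pl x y) {c : K} (hc : c ≠ 0)
    (hcx : formEval d a x y = c * x) (hcy : formEval d b x y = c * y) :
    0 ≤ pl.v (multiplier d a b x y c) := by
  classical
  -- orbit tracking
  have htrack : ∀ (u w : K) (h : ¬(u = 0 ∧ w = 0)) (k : ℕ),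
      ∃ h' : ¬((itV e A B u w k).1 = 0 ∧ (itV e A B u w k).2 = 0),
        φ^[k] (P1.mk u w h) = P1.mk (itV e A B u w k).1 (itV e A B u w k).2 h' := by
    intro u w h k
    induction k with
    | zero => exact ⟨h, rfl⟩
    | succ k ih =>
        obtain ⟨h', hk⟩ := ih
        obtain ⟨h'', hs⟩ := hlA.2 (itV e A B u w k).1 (itV e A B u w k).2 h'
        exact ⟨h'', by rw [Function.iterate_succ_apply', hk, hs]; rfl⟩
  -- the scalar c' with  (itV n) = c' • (x, y)
  obtain ⟨hn', htn⟩ := htrack x y hxy n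
  have hmkeq : P1.mk (itV e A B x y n).1 (itV e A B x y n).2 hn' = P1.mk x y hxy := by
    rw [← htn, hfix]
  obtain ⟨c', hc', hux, hwy⟩ := mk_eq_scalar _ _ hmkeq
  -- integrality of the value iterates
  have hUVint : ∀ k, 0 ≤ pl.v (itV e A B x y k).1 ∧ 0 ≤ pl.v (itV e A B x y k).2 := by
    intro k; induction k with
    | zero => exact ⟨hNrm.1, hNrm.2.1⟩
    | succ k ih =>
        exact ⟨formEval_v_nonneg pl e A _ _ hAi ih.1 ih.2,
          formEval_v_nonneg pl e B _ _ hBi ih.1 ih.2⟩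
  -- polynomial curves through (x, y) in two directions
  have hp1e : (Polynomial.C x + Polynomial.X).eval 0 = x := by simp
  have hq1e : (Polynomial.C y : Polynomial K).eval 0 = y := by simp
  have hp2e : (Polynomial.C x : Polynomial K).eval 0 = x := by simp
  have hq2e : (Polynomial.C y + Polynomial.X).eval 0 = y := by simp
  have hdp1 : (Polynomial.C x + Polynomial.X).derivative.eval 0 = (1 : K) := by simp
  have hdq1 : (Polynomial.C y : Polynomial K).derivative.eval 0 = (0 : K) := by simp
  have hdp2 : (Polynomial.C x : Polynomial K).derivative.eval 0 = (0 : K) := by simp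
  have hdq2 : (Polynomial.C y + Polynomial.X).derivative.eval 0 = (1 : K) := by simp
  set P1p : ℕ → Polynomial K × Polynomial K :=
    itP e A B (Polynomial.C x + Polynomial.X) (Polynomial.C y) with hP1p
  set P2p : ℕ → Polynomial K × Polynomial K :=
    itP e A B (Polynomial.C x) (Polynomial.C y + Polynomial.X) with hP2p
  have hP1ev : ∀ k, (P1p k).1.eval 0 = (itV e A B x y k).1 ∧
      (P1p k).2.eval 0 = (itV e A B x y k).2 := by
    intro k
    have h := itP_eval e A B (Polynomial.C x + Polynomial.X) (Polynomial.C y) k 0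
    rw [hp1e, hq1e] at h
    exact h
  have hP2ev : ∀ k, (P2p k).1.eval 0 = (itV e A B x y k).1 ∧
      (P2p k).2.eval 0 = (itV e A B x y k).2 := by
    intro k
    have h := itP_eval e A B (Polynomial.C x) (Polynomial.C y + Polynomial.X) k 0
    rw [hp2e, hq2e] at h
    exact h
  -- Jacobian recurrences
  have hrecP1 : ∀ k, (P1p (k + 1)).1.derivative.eval 0 =
      formEvalDx e A (itV e A B x y k).1 (itV e A B x y k).2 * (P1p k).1.derivative.eval 0 +
      formEvalDy e A (itV e A B x y k).1 (itV e A B x y k).2 * (P1p k).2.derivative.eval 0 := by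
    intro k
    show ((lineEval e A (P1p k).1 (P1p k).2).derivative).eval 0 = _
    rw [lineEval_deriv_eval, (hP1ev k).1, (hP1ev k).2]
  have hrecQ1 : ∀ k, (P1p (k + 1)).2.derivative.eval 0 =
      formEvalDx e B (itV e A B x y k).1 (itV e A B x y k).2 * (P1p k).1.derivative.eval 0 +
      formEvalDy e B (itV e A B x y k).1 (itV e A B x y k).2 * (P1p k).2.derivative.eval 0 := by
    intro k
    show ((lineEval e B (P1p k).1 (P1p k).2).derivative).eval 0 = _
    rw [lineEval_deriv_eval, (hP1ev k).1, (hP1ev k).2]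
  have hrecP2 : ∀ k, (P2p (k + 1)).1.derivative.eval 0 =
      formEvalDx e A (itV e A B x y k).1 (itV e A B x y k).2 * (P2p k).1.derivative.eval 0 +
      formEvalDy e A (itV e A B x y k).1 (itV e A B x y k).2 * (P2p k).2.derivative.eval 0 := by
    intro k
    show ((lineEval e A (P2p k).1 (P2p k).2).derivative).eval 0 = _
    rw [lineEval_deriv_eval, (hP2ev k).1, (hP2ev k).2]
  have hrecQ2 : ∀ k, (P2p (k + 1)).2.derivative.eval 0 =
      formEvalDx e B (itV e A B x y k).1 (itV e A B x y k).2 * (P2p k).1.derivative.eval 0 +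
      formEvalDy e B (itV e A B x y k).1 (itV e A B x y k).2 * (P2p k).2.derivative.eval 0 := by
    intro k
    show ((lineEval e B (P2p k).1 (P2p k).2).derivative).eval 0 = _
    rw [lineEval_deriv_eval, (hP2ev k).1, (hP2ev k).2]
  have hb10 : (P1p 0).1.derivative.eval 0 = (1 : K) := hdp1
  have hb20 : (P1p 0).2.derivative.eval 0 = (0 : K) := hdq1
  have hb30 : (P2p 0).1.derivative.eval 0 = (0 : K) := hdp2
  have hb40 : (P2p 0).2.derivative.eval 0 = (1 : K) := hdq2
  -- Euler chain
  have hEulerC : ∀ k,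
      (x * (P1p k).1.derivative.eval 0 + y * (P2p k).1.derivative.eval 0 =
        (e : K) ^ k * (itV e A B x y k).1) ∧
      (x * (P1p k).2.derivative.eval 0 + y * (P2p k).2.derivative.eval 0 =
        (e : K) ^ k * (itV e A B x y k).2) := by
    intro k
    induction k with
    | zero =>
        rw [hb10, hb20, hb30, hb40]
        constructor <;> simp [itV]
    | succ k ih =>
        have hA' := euler_formEval e A (itV e A B x y k).1 (itV e A B x y k).2
        have hB' := euler_formEval e B (itV e A B x y k).1 (itV e A B x y k).2
        have hV1 : (itV e A B x y (k + 1)).1 =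
            formEval e A (itV e A B x y k).1 (itV e A B x y k).2 := rfl
        have hV2 : (itV e A B x y (k + 1)).2 =
            formEval e B (itV e A B x y k).1 (itV e A B x y k).2 := rfl
        constructor
        · rw [hrecP1 k, hrecP2 k, hV1, pow_succ]
          linear_combination (formEvalDx e A (itV e A B x y k).1 (itV e A B x y k).2) * ih.1 +
            (formEvalDy e A (itV e A B x y k).1 (itV e A B x y k).2) * ih.2 +
            ((e : K) ^ k) * hA'
        · rw [hrecQ1 k, hrecQ2 k, hV2, pow_succ]
          linear_combination (formEvalDx e B (itV e A B x y k).1 (itV e A B x y k).2) * ih.1 +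
            (formEvalDy e B (itV e A B x y k).1 (itV e A B x y k).2) * ih.2 +
            ((e : K) ^ k) * hB'
  -- Jacobian integrality
  have hJint : ∀ k, 0 ≤ pl.v ((P1p k).1.derivative.eval 0) ∧
      0 ≤ pl.v ((P1p k).2.derivative.eval 0) ∧
      0 ≤ pl.v ((P2p k).1.derivative.eval 0) ∧
      0 ≤ pl.v ((P2p k).2.derivative.eval 0) := by
    intro k
    induction k with
    | zero =>
        rw [hb10, hb20, hb30, hb40]
        refine ⟨le_of_eq pl.v_one.symm, le_of_eq pl.v_zero.symm,
          le_of_eq pl.v_zero.symm, le_of_eq pl.v_one.symm⟩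
    | succ k ih =>
        have hDX := formEvalDx_v_nonneg pl e A _ _ hAi (hUVint k).1 (hUVint k).2
        have hDY := formEvalDy_v_nonneg pl e A _ _ hAi (hUVint k).1 (hUVint k).2
        have hDX' := formEvalDx_v_nonneg pl e B _ _ hBi (hUVint k).1 (hUVint k).2
        have hDY' := formEvalDy_v_nonneg pl e B _ _ hBi (hUVint k).1 (hUVint k).2
        refine ⟨?_, ?_, ?_, ?_⟩
        · rw [hrecP1 k]
          exact pl.v_add_nonneg (pl.v_mul_nonneg hDX ih.1) (pl.v_mul_nonneg hDY ih.2.1)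
        · rw [hrecQ1 k]
          exact pl.v_add_nonneg (pl.v_mul_nonneg hDX' ih.1) (pl.v_mul_nonneg hDY' ih.2.1)
        · rw [hrecP2 k]
          exact pl.v_add_nonneg (pl.v_mul_nonneg hDX ih.2.2.1) (pl.v_mul_nonneg hDY ih.2.2.2)
        · rw [hrecQ2 k]
          exact pl.v_add_nonneg (pl.v_mul_nonneg hDX' ih.2.2.1) (pl.v_mul_nonneg hDY' ih.2.2.2)
  -- the cross identity
  have hcross : ∀ (p0 q0 : Polynomial K),
      lineEval d a p0 q0 * (itP e A B p0 q0 n).2 -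
        (itP e A B p0 q0 n).1 * lineEval d b p0 q0 = 0 := by
    intro p0 q0
    apply Polynomial.funext
    intro t
    rw [Polynomial.eval_zero, Polynomial.eval_sub, Polynomial.eval_mul, Polynomial.eval_mul,
      lineEval_eval, lineEval_eval, (itP_eval e A B p0 q0 n t).1, (itP_eval e A B p0 q0 n t).2]
    by_cases hpt : p0.eval t = 0 ∧ q0.eval t = 0
    · rw [hpt.1, hpt.2, formEval_zero_zero hd a, formEval_zero_zero hd b]
      ring
    · obtain ⟨h1, ht1⟩ := htrack (p0.eval t) (q0.eval t) hpt n
      obtain ⟨h2, ht2⟩ := hlift.2 (p0.eval t) (q0.eval t) hpt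
      obtain ⟨s, hs0, hsF, hsG⟩ := mk_eq_scalar _ _ (ht2.symm.trans ht1)
      rw [hsF, hsG]; ring
  -- differentiate the cross identities at 0
  have hEq : ∀ (p0 q0 : Polynomial K),
      (lineEval d a p0 q0).derivative.eval 0 * (itP e A B p0 q0 n).2.eval 0 +
        (lineEval d a p0 q0).eval 0 * (itP e A B p0 q0 n).2.derivative.eval 0 -
        ((itP e A B p0 q0 n).1.derivative.eval 0 * (lineEval d b p0 q0).eval 0 +
          (itP e A B p0 q0 n).1.eval 0 * (lineEval d b p0 q0).derivative.eval 0) = 0 := by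
    intro p0 q0
    have h := hcross p0 q0
    have hD : (lineEval d a p0 q0 * (itP e A B p0 q0 n).2 -
        (itP e A B p0 q0 n).1 * lineEval d b p0 q0).derivative.eval 0 = 0 := by
      rw [h]; simp
    rw [Polynomial.derivative_sub, Polynomial.derivative_mul, Polynomial.derivative_mul,
      Polynomial.eval_sub, Polynomial.eval_add, Polynomial.eval_add, Polynomial.eval_mul,
      Polynomial.eval_mul, Polynomial.eval_mul, Polynomial.eval_mul] at hD
    exact hD
  -- atoms, direction 1
  have hLa1d : (lineEval d a (Polynomial.C x + Polynomial.X) (Polynomial.C y)).derivative.eval 0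
      = formEvalDx d a x y := by
    rw [lineEval_deriv_eval, hp1e, hq1e, hdp1, hdq1]; ring
  have hLb1d : (lineEval d b (Polynomial.C x + Polynomial.X) (Polynomial.C y)).derivative.eval 0
      = formEvalDx d b x y := by
    rw [lineEval_deriv_eval, hp1e, hq1e, hdp1, hdq1]; ring
  have hLa1 : (lineEval d a (Polynomial.C x + Polynomial.X) (Polynomial.C y)).eval 0 = c * x := by
    rw [lineEval_eval, hp1e, hq1e, hcx]
  have hLb1 : (lineEval d b (Polynomial.C x + Polynomial.X) (Polynomial.C y)).eval 0 = c * y := by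
    rw [lineEval_eval, hp1e, hq1e, hcy]
  have hLa2d : (lineEval d a (Polynomial.C x) (Polynomial.C y + Polynomial.X)).derivative.eval 0
      = formEvalDy d a x y := by
    rw [lineEval_deriv_eval, hp2e, hq2e, hdp2, hdq2]; ring
  have hLb2d : (lineEval d b (Polynomial.C x) (Polynomial.C y + Polynomial.X)).derivative.eval 0
      = formEvalDy d b x y := by
    rw [lineEval_deriv_eval, hp2e, hq2e, hdp2, hdq2]; ring
  have hLa2 : (lineEval d a (Polynomial.C x) (Polynomial.C y + Polynomial.X)).eval 0 = c * x := by
    rw [lineEval_eval, hp2e, hq2e, hcx]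
  have hLb2 : (lineEval d b (Polynomial.C x) (Polynomial.C y + Polynomial.X)).eval 0 = c * y := by
    rw [lineEval_eval, hp2e, hq2e, hcy]
  have hE1 := hEq (Polynomial.C x + Polynomial.X) (Polynomial.C y)
  rw [hLa1d, hLb1d, hLa1, hLb1, ← hP1p, (hP1ev n).1, (hP1ev n).2, hux, hwy] at hE1
  have hE2 := hEq (Polynomial.C x) (Polynomial.C y + Polynomial.X)
  rw [hLa2d, hLb2d, hLa2, hLb2, ← hP2p, (hP2ev n).1, (hP2ev n).2, hux, hwy] at hE2
  -- Euler identities at the fixed point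
  have hEa : x * formEvalDx d a x y + y * formEvalDy d a x y = (d : K) * (c * x) := by
    have h := euler_formEval d a x y; rw [hcx] at h; exact h
  have hEb : x * formEvalDx d b x y + y * formEvalDy d b x y = (d : K) * (c * y) := by
    have h := euler_formEval d b x y; rw [hcy] at h; exact h
  have hEp : x * (P1p n).1.derivative.eval 0 + y * (P2p n).1.derivative.eval 0 =
      (e : K) ^ n * (c' * x) := by
    have h := (hEulerC n).1; rw [hux] at h; exact h
  have hEq' : x * (P1p n).2.derivative.eval 0 + y * (P2p n).2.derivative.eval 0 =
      (e : K) ^ n * (c' * y) := by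
    have h := (hEulerC n).2; rw [hwy] at h; exact h
  -- the multiplier equality
  have hkey : multiplier d a b x y c =
      ((P1p n).1.derivative.eval 0 + (P2p n).2.derivative.eval 0 - (e : K) ^ n * c') / c' := by
    rw [multiplier, div_eq_div_iff hc hc']
    by_cases hy : y = 0
    · have hx : x ≠ 0 := fun h => hxy ⟨h, hy⟩
      subst hy
      apply mul_left_cancel₀ hx
      linear_combination (-1 : K) * hE2 + c' * hEa - c * hEp
    · apply mul_left_cancel₀ hy
      linear_combination hE1 + c' * hEb - c * hEq'
  rw [hkey]
  by_cases he0 : e = 0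
  · subst he0
    have hz1 : (P1p n).1.derivative.eval 0 = 0 := by
      obtain ⟨m, rfl⟩ : ∃ m, n = m + 1 := ⟨n - 1, by omega⟩
      rw [hrecP1 m, formEvalDx_degree_zero, formEvalDy_degree_zero]; ring
    have hz2 : (P2p n).2.derivative.eval 0 = 0 := by
      obtain ⟨m, rfl⟩ : ∃ m, n = m + 1 := ⟨n - 1, by omega⟩
      rw [hrecQ2 m, formEvalDx_degree_zero, formEvalDy_degree_zero]; ring
    rw [hz1, hz2]
    rw [show ((0 : ℕ) : K) = 0 from Nat.cast_zero, zero_pow (show n ≠ 0 by omega)]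
    rw [show ((0 : K) + 0 - 0 * c') / c' = 0 by simp]
    rw [pl.v_zero]
  · have he1 : 1 ≤ e := by omega
    have hNrmk : ∀ k, Nrm pl (itV e A B x y k).1 (itV e A B x y k).2 := by
      intro k; induction k with
      | zero => exact hNrm
      | succ k ih => exact keyStep pl he1 A B hAi hBi hlA.1 hres0 ih
    have hvc' : pl.v c' = 0 := by
      have hNn := hNrmk n
      have hge : 0 ≤ pl.v c' := by
        rcases hNrm.2.2 with ⟨hx0, hvx⟩ | ⟨hy0, hvy⟩
        · have h1 : 0 ≤ pl.v ((itV e A B x y n).1) := hNn.1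
          rw [hux, pl.v_mul c' x hc' hx0, hvx] at h1; omega
        · have h1 : 0 ≤ pl.v ((itV e A B x y n).2) := hNn.2.1
          rw [hwy, pl.v_mul c' y hc' hy0, hvy] at h1; omega
      have hle : pl.v c' ≤ 0 := by
        rcases hNn.2.2 with ⟨hu0, hvu⟩ | ⟨hv0, hvv⟩
        · have hx0 : x ≠ 0 := by
            intro h; rw [hux, h, mul_zero] at hu0; exact hu0 rfl
          rw [hux, pl.v_mul c' x hc' hx0] at hvu
          have := hNrm.1; omega
        · have hy0 : y ≠ 0 := by
            intro h; rw [hwy, h, mul_zero] at hv0; exact hv0 rfl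
          rw [hwy, pl.v_mul c' y hc' hy0] at hvv
          have := hNrm.2.1; omega
      omega
    by_cases hnum : (P1p n).1.derivative.eval 0 + (P2p n).2.derivative.eval 0 -
        (e : K) ^ n * c' = 0
    · rw [hnum, zero_div, pl.v_zero]
    · rw [pl.v_div hnum hc', hvc']
      have hE : 0 ≤ pl.v ((e : K) ^ n * c') :=
        pl.v_mul_nonneg (pl.v_pow_nonneg (pl.v_natCast_nonneg e) n) (le_of_eq hvc'.symm)
      have h1 : 0 ≤ pl.v ((P1p n).1.derivative.eval 0 + (P2p n).2.derivative.eval 0 -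
          (e : K) ^ n * c') := by
        rw [sub_eq_add_neg]
        refine pl.v_add_nonneg (pl.v_add_nonneg (hJint n).1 (hJint n).2.2.2) ?_
        rw [pl.v_neg]; exact hE
      omega

end Core

/-- Lemma 4.3.  Let `K` be a global field, `𝔭` a non-archimedean place
of `K`, and `φ` an endomorphism of `ℙ¹` defined over `K` with good reduction at `𝔭`.  If
`P ∈ ℙ¹(K)` is periodic for `φ`, then `P` is attracting or indifferent, i.e.
`v_𝔭(λ_P(φ)) ≥ 0`.  Here the multiplier `λ_P(φ)` of the fixed point `P = [x:y]` of `φ^n`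
(`n` the minimal period) is computed from any homogeneous lift `(F, G)` of `φ^n` via the
trace formula `λ = (F_x(x,y) + G_y(x,y) - d⬝c)/c`, where `F(x,y) = c⬝x`, `G(x,y) = c⬝y`. -/
theorem stmt13 (K : Type) [Field K] (hK : IsGlobalField K) (pl : Place K)
    (φ : P1 K → P1 K) (hφ : IsEndo φ) (hgood : GoodReduction pl φ)
    (P : P1 K) (hP : PeriodicPt φ P)
    (n : ℕ) (hn : n = Function.minimalPeriod φ P)
    (d : ℕ) (a b : Fin (d + 1) → K) (hlift : IsLift (φ^[n]) d a b)
    (x y : K) (hxy : ¬(x = 0 ∧ y = 0)) (hPxy : P = P1.mk x y hxy)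
    (c : K) (hc : c ≠ 0)
    (hcx : formEval d a x y = c * x) (hcy : formEval d b x y = c * y) :
    0 ≤ pl.v (multiplier d a b x y c) := by
  classical
  -- K is infinite
  have hinf : Infinite K := by
    rcases hK with hNF | ⟨p, hp, Alg, hFD⟩
    · haveI := hNF
      haveI : CharZero K := hNF.to_charZero
      exact CharZero.infinite K
    · haveI := hp
      letI := Alg
      haveI : Fact (1 < p) := ⟨hp.out.one_lt⟩
      haveI : Infinite (Polynomial (ZMod p)) := Polynomial.infinite
      haveI : Infinite (RatFunc (ZMod p)) :=
        Infinite.of_injective _ (RatFunc.algebraMap_injective (ZMod p))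
      exact Infinite.of_injective (algebraMap (RatFunc (ZMod p)) K)
        (algebraMap (RatFunc (ZMod p)) K).injective
  haveI := hinf
  -- positivity of the period
  obtain ⟨m, hm0, hmP⟩ := hP
  have hn1 : 1 ≤ n := by
    rw [hn]
    have : Function.IsPeriodicPt φ m P := hmP
    exact (this.minimalPeriod_pos hm0)
  -- the fixed-point equation
  have hfixP : φ^[n] P = P := by
    rw [hn]; exact Function.iterate_minimalPeriod
  have hfix : φ^[n] (P1.mk x y hxy) = P1.mk x y hxy := by
    rw [← hPxy]; exact hfixP
  -- degenerate degree-zero case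
  by_cases hd0 : d = 0
  · subst hd0
    rw [multiplier, formEvalDx_degree_zero, formEvalDy_degree_zero]
    rw [show ((0 : K) + 0 - ((0 : ℕ) : K) * c) / c = 0 by push_cast; ring]
    rw [pl.v_zero]
  have hd : 1 ≤ d := by omega
  -- good reduction data
  obtain ⟨e, A, B, hlA, hAi, hBi, hres0⟩ := hgood
  -- normalize the representative (x, y)
  set m0 : ℤ := if x = 0 then pl.v y else if y = 0 then pl.v x else min (pl.v x) (pl.v y)
    with hm0def
  obtain ⟨t, ht0, htv⟩ := pl.v_surj (-m0)
  have hxy' : ¬(t * x = 0 ∧ t * y = 0) := by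
    rintro ⟨h1, h2⟩
    exact hxy ⟨by rcases mul_eq_zero.mp h1 with h | h; exact absurd h ht0; exact h,
      by rcases mul_eq_zero.mp h2 with h | h; exact absurd h ht0; exact h⟩
  have hNrm : Nrm pl (t * x) (t * y) := by
    by_cases hx0 : x = 0
    · have hy0 : y ≠ 0 := fun h => hxy ⟨hx0, h⟩
      have hm : m0 = pl.v y := by rw [hm0def, if_pos hx0]
      have hvy : pl.v (t * y) = 0 := by
        rw [pl.v_mul t y ht0 hy0, htv, hm]; ring
      refine ⟨?_, le_of_eq hvy.symm, Or.inr ⟨mul_ne_zero ht0 hy0, hvy⟩⟩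
      rw [hx0, mul_zero, pl.v_zero]
    · by_cases hy0 : y = 0
      · have hm : m0 = pl.v x := by rw [hm0def, if_neg hx0, if_pos hy0]
        have hvx : pl.v (t * x) = 0 := by
          rw [pl.v_mul t x ht0 hx0, htv, hm]; ring
        refine ⟨le_of_eq hvx.symm, ?_, Or.inl ⟨mul_ne_zero ht0 hx0, hvx⟩⟩
        rw [hy0, mul_zero, pl.v_zero]
      · have hm : m0 = min (pl.v x) (pl.v y) := by rw [hm0def, if_neg hx0, if_neg hy0]
        have hvx : pl.v (t * x) = pl.v x - m0 := by
          rw [pl.v_mul t x ht0 hx0, htv]; ring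
        have hvy : pl.v (t * y) = pl.v y - m0 := by
          rw [pl.v_mul t y ht0 hy0, htv]; ring
        refine ⟨by rw [hvx, hm]; omega, by rw [hvy, hm]; omega, ?_⟩
        rcases le_total (pl.v x) (pl.v y) with hle | hle
        · exact Or.inl ⟨mul_ne_zero ht0 hx0, by rw [hvx, hm]; omega⟩
        · exact Or.inr ⟨mul_ne_zero ht0 hy0, by rw [hvy, hm]; omega⟩
  -- the scaled point is the same projective point
  have hmk : P1.mk (t * x) (t * y) hxy' = P1.mk x y hxy := by
    rw [P1.mk, P1.mk, Projectivization.mk_eq_mk_iff']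
    refine ⟨t, ?_⟩
    funext i
    fin_cases i <;> simp
  have hfix' : φ^[n] (P1.mk (t * x) (t * y) hxy') = P1.mk (t * x) (t * y) hxy' := by
    rw [hmk]; exact hfix
  -- the scaled scalar
  have htd : t ^ d = t ^ (d - 1) * t := by
    conv_lhs => rw [show d = (d - 1) + 1 by omega]
    rw [pow_succ]
  have hc2 : t ^ (d - 1) * c ≠ 0 := mul_ne_zero (pow_ne_zero _ ht0) hc
  have hcx' : formEval d a (t * x) (t * y) = (t ^ (d - 1) * c) * (t * x) := by
    rw [formEval_smul, hcx, htd]; ring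
  have hcy' : formEval d b (t * x) (t * y) = (t ^ (d - 1) * c) * (t * y) := by
    rw [formEval_smul, hcy, htd]; ring
  -- the multiplier is invariant under scaling
  have hmult : multiplier d a b (t * x) (t * y) (t ^ (d - 1) * c) = multiplier d a b x y c := by
    rw [multiplier, multiplier, formEvalDx_smul, formEvalDy_smul]
    rw [show t ^ (d - 1) * formEvalDx d a x y + t ^ (d - 1) * formEvalDy d b x y -
        (d : K) * (t ^ (d - 1) * c) =
        t ^ (d - 1) * (formEvalDx d a x y + formEvalDy d b x y - (d : K) * c) by ring]
    exact mul_div_mul_left _ _ (pow_ne_zero _ ht0)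
  rw [← hmult]
  exact core pl φ hlA hAi hBi hres0 hn1 hd hlift hxy' hfix' hNrm hc2 hcx' hcy' 

end ArxivPreper
end

section
/- Let K be a global field and 𝔭 a non-archimedean place of K. For all points P_1, P_2, P_3 ∈ P^1(K), the 𝔭-adic logarithmic distance satisfies δ_𝔭(P_1, P_3) ≥ min{δ_𝔭(P_1, P_2), δ_𝔭(P_2, P_3)}. -/
/-!
Common definitions used to formalize the statements of
"Preperiodic points for rational functions defined over a global field
in terms of good reduction" (arXiv:1403.2293).

* A (normalized, non-archimedean) place of a field `K` is modeled as a surjective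
  discrete valuation `v : K → ℤ` (with the junk convention `v 0 = 0`).
* `P1 K` is the projective line over `K`; a point `[x : y]` is `P1.mk x y _`.
* An endomorphism of `P1` defined over `K` is a map `φ : P1 K → P1 K` admitting a
  lift by a pair of binary forms of a common degree `d`, given through their
  coefficient vectors, with nonvanishing resultant (the resultant is defined as
  the determinant of the Sylvester matrix).
* `φ` has good reduction at a place `pl` if it admits a lift whose coefficients
  are `pl`-integral and whose resultant is a `pl`-unit.
* `logDist` is the `𝔭`-adic logarithmic distance `δ_𝔭`; two points of `P1 K` have
  the same reduction modulo `pl` if and only if `0 < logDist pl P Q`.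
* The multiplier of a fixed point `[x:y]` of a map lifted by the forms `(a, b)` of
  degree `d` is computed by the trace formula
  `λ = (∂F/∂x (x,y) + ∂G/∂y (x,y) - d⬝c)/c`, where `c` is the scalar with
  `F(x,y) = c⬝x` and `G(x,y) = c⬝y`.
-/

namespace ArxivPreper

variable {K : Type*} [Field K]

/-!
Write `P₁ = [x]`, `P₂ = [y]`, `P₃ = [z]` and `D(u, w) = u₀ w₁ - w₀ u₁`. For either coordinate
index `k` the vectors satisfy the three-term relation
`y_k D(x, z) = D(x, y) z_k + D(y, z) x_k`.
Choosing `k` with `v(y_k) = min (v y₀) (v y₁)`, the ultrametric inequality and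
`v(z_k) ≥ min (v z₀) (v z₁)`, `v(x_k) ≥ min (v x₀) (v x₁)` give the claim after normalising.
-/

lemma extv_mul (pl : Place K) (x y : K) : extv pl (x * y) = extv pl x + extv pl y := by
  unfold extv
  by_cases hx : x = 0
  · simp [hx]
  by_cases hy : y = 0
  · simp [hy]
  rw [if_neg hx, if_neg hy, if_neg (mul_ne_zero hx hy), pl.v_mul x y hx hy, WithTop.coe_add]

lemma min_le_extv_add (pl : Place K) (x y : K) :
    min (extv pl x) (extv pl y) ≤ extv pl (x + y) := by
  by_cases hx : x = 0
  · simp [hx]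
  by_cases hy : y = 0
  · simp [hy]
  by_cases hxy : x + y = 0
  · simp [extv, hxy]
  unfold extv
  rw [if_neg hx, if_neg hy, if_neg hxy, ← WithTop.coe_min, WithTop.coe_le_coe]
  exact pl.v_add x y hx hy hxy

lemma vminVec_le_extv (pl : Place K) (w : Fin 2 → K) (k : Fin 2) :
    (vminVec pl w : WithTop ℤ) ≤ extv pl (w k) := by
  by_cases hk : w k = 0
  · simp [extv, hk]
  rw [extv, if_neg hk, WithTop.coe_le_coe]
  unfold vminVec
  fin_cases k <;> split_ifs <;> simp_all

lemma exists_extv_eq_vminVec (pl : Place K) {w : Fin 2 → K} (hw : w ≠ 0) :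
    ∃ k : Fin 2, extv pl (w k) = vminVec pl w := by
  unfold vminVec extv
  by_cases h0 : w 0 = 0
  · have h1 : w 1 ≠ 0 := fun h1 => hw (funext fun i => by fin_cases i <;> assumption)
    exact ⟨1, by simp [h0, h1]⟩
  by_cases h1 : w 1 = 0
  · exact ⟨0, by simp [h0, h1]⟩
  rcases le_total (pl.v (w 0)) (pl.v (w 1)) with hle | hle
  · exact ⟨0, by simp [h0, h1, hle]⟩
  · exact ⟨1, by simp [h0, h1, hle]⟩

lemma mul_cross_eq (x y z : Fin 2 → K) (k : Fin 2) :
    y k * (x 0 * z 1 - z 0 * x 1) =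
      (x 0 * y 1 - y 0 * x 1) * z k + (y 0 * z 1 - z 0 * y 1) * x k := by
  fin_cases k <;> simp only [Fin.zero_eta, Fin.mk_one] <;> ring

lemma min_extv_cross_add_vminVec_le (pl : Place K) (x : Fin 2 → K) {y : Fin 2 → K}
    (hy : y ≠ 0) (z : Fin 2 → K) :
    min (extv pl (x 0 * y 1 - y 0 * x 1) + vminVec pl z)
        (extv pl (y 0 * z 1 - z 0 * y 1) + vminVec pl x) ≤
      vminVec pl y + extv pl (x 0 * z 1 - z 0 * x 1) := by
  obtain ⟨k, hk⟩ := exists_extv_eq_vminVec pl hy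
  calc _ ≤ min (extv pl ((x 0 * y 1 - y 0 * x 1) * z k))
          (extv pl ((y 0 * z 1 - z 0 * y 1) * x k)) := by
        rw [extv_mul, extv_mul]
        gcongr <;> exact vminVec_le_extv pl _ k
    _ ≤ _ := min_le_extv_add pl _ _
    _ = _ := by rw [← mul_cross_eq, extv_mul, hk]

lemma min_add_coe_le_of_min_add_coe_le {a b c : WithTop ℤ} {m₁ m₂ m₃ : ℤ}
    (h : min (a + m₃) (b + m₁) ≤ m₂ + c) :
    min (a + (-m₁ - m₂ : ℤ)) (b + (-m₂ - m₃ : ℤ)) ≤ c + (-m₁ - m₃ : ℤ) := by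
  calc min (a + (-m₁ - m₂ : ℤ)) (b + (-m₂ - m₃ : ℤ))
      = min (a + m₃ + (-(m₁ + m₂ + m₃) : ℤ)) (b + m₁ + (-(m₁ + m₂ + m₃) : ℤ)) := by
        simp only [add_assoc, ← WithTop.coe_add]; ring_nf
    _ ≤ m₂ + c + (-(m₁ + m₂ + m₃) : ℤ) := by rw [min_add_add_right]; gcongr
    _ = c + (-m₁ - m₃ : ℤ) := by
        rw [add_comm (m₂ : WithTop ℤ), add_assoc, ← WithTop.coe_add]; ring_nf

theorem stmt16_general (K : Type) [Field K] (pl : Place K)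
    (P₁ P₂ P₃ : P1 K) :
    min (logDist pl P₁ P₂) (logDist pl P₂ P₃) ≤ logDist pl P₁ P₃ := by
  have h := min_extv_cross_add_vminVec_le pl P₁.rep P₂.rep_nonzero P₃.rep
  simpa [logDist, sub_eq_add_neg] using min_add_coe_le_of_min_add_coe_le h

/-- Proposition 5.1 of Morton–Silverman.  For a global field `K`, a
non-archimedean place `𝔭` of `K` and all `P₁, P₂, P₃ ∈ ℙ¹(K)`,
`δ_𝔭(P₁,P₃) ≥ min (δ_𝔭(P₁,P₂)) (δ_𝔭(P₂,P₃))`. -/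
theorem stmt16 (K : Type) [Field K] (hK : IsGlobalField K) (pl : Place K)
    (P₁ P₂ P₃ : P1 K) :
    min (logDist pl P₁ P₂) (logDist pl P₂ P₃) ≤ logDist pl P₁ P₃ :=
  stmt16_general K pl P₁ P₂ P₃

end ArxivPreper
end
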